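/- arXiv:1906.10333 — 7 statements merged into one kernel-verified Lean document; each statement's English description precedes it below -/
import Mathlib

section
/- In any (possibly infinite) one-to-one marriage market in which each agent's preference list is a well-ordered list of order type at most ω over acceptable partners, a stable matching exists. -/
/-- A one-to-one marriage market: each man `m` has a preference list over women
encoded by an injective ranking `mPref m : W → Option ℕ` (rank `some r`, with
smaller rank preferred, `none` meaning unacceptable; such a list is either
finite or of order type ω), and symmetrically for women. -/
structure MarriageMarket (M W : Type*) where
  mPref : M → W → Option ℕ
  wPref : W → M → Option ℕ
  mPref_inj : ∀ m w w' r, mPref m w = some r → mPref m w' = some r → w = w'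
  wPref_inj : ∀ w m m' r, wPref w m = some r → wPref w m' = some r → m = m'

namespace MarriageMarket

variable {M W : Type*}

/-- A matching: each man is assigned at most one woman, and each woman is assigned
to at most one man. -/
def IsMatching (μ : M → Option W) : Prop :=
  ∀ m m' w, μ m = some w → μ m' = some w → m = m'

/-- Man `m` strictly prefers woman `w` to the outcome `o` (a partner or being unmatched). -/
def ManPrefers (E : MarriageMarket M W) (m : M) (w : W) (o : Option W) : Prop :=
  ∃ r, E.mPref m w = some r ∧
    (o = none ∨ ∃ w' r', o = some w' ∧ E.mPref m w' = some r' ∧ r < r')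

/-- Woman `w` strictly prefers man `m` to her assignment under the matching `μ`. -/
def WomanPrefers (E : MarriageMarket M W) (w : W) (m : M) (μ : M → Option W) : Prop :=
  ∃ r, E.wPref w m = some r ∧
    ((∀ m', μ m' ≠ some w) ∨ ∃ m' r', μ m' = some w ∧ E.wPref w m' = some r' ∧ r < r')

/-- `(m, w)` is a blocking pair for `μ`: each strictly prefers the other to their
current assignment (or to being unmatched). -/
def Blocks (E : MarriageMarket M W) (μ : M → Option W) (m : M) (w : W) : Prop :=
  ManPrefers E m w (μ m) ∧ WomanPrefers E w m μ

/-- A stable matching: a matching that is individually rational and has no blocking pair. -/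
def Stable (E : MarriageMarket M W) (μ : M → Option W) : Prop :=
  IsMatching μ ∧
  (∀ m w, μ m = some w → E.mPref m w ≠ none ∧ E.wPref w m ≠ none) ∧
  (∀ m w, ¬ Blocks E μ m w)

/-- Man `m` weakly prefers outcome `o` to outcome `o'`: they are equal, or `o` is a
woman he ranks above `o'` (including `o'` being unmatched). -/
def ManWeaklyPrefers (E : MarriageMarket M W) (m : M) (o o' : Option W) : Prop :=
  o = o' ∨ ∃ w, o = some w ∧ ManPrefers E m w o'

/-- A man-optimal stable matching: a stable matching that every man weakly prefers
to every other stable matching. -/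
def ManOptimal (E : MarriageMarket M W) (μ : M → Option W) : Prop :=
  Stable E μ ∧ ∀ ν : M → Option W, Stable E ν → ∀ m, ManWeaklyPrefers E m (μ m) (ν m)

end MarriageMarket

namespace StableAux

open MarriageMarket

variable {M W : Type*}

/-- Candidate ranks for man `m` given women's aspiration ranks `vW`. -/
def mSet (E : MarriageMarket M W) (vW : W → ℕ∞) (m : M) : Set ℕ∞ :=
  {x | ∃ (w : W) (r s : ℕ), x = (r : ℕ∞) ∧ E.mPref m w = some r ∧ E.wPref w m = some s ∧ (s : ℕ∞) ≤ vW w}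

/-- Candidate ranks for woman `w` given men's aspiration ranks `vM`. -/
def wSet (E : MarriageMarket M W) (vM : M → ℕ∞) (w : W) : Set ℕ∞ :=
  {x | ∃ (m : M) (s r : ℕ), x = (s : ℕ∞) ∧ E.wPref w m = some s ∧ E.mPref m w = some r ∧ (r : ℕ∞) ≤ vM m}

/-- The Adachi-style monotone operator on the product lattice. -/
noncomputable def F (E : MarriageMarket M W) :
    ((M → ℕ∞) × (W → ℕ∞)ᵒᵈ) →o ((M → ℕ∞) × (W → ℕ∞)ᵒᵈ) where
  toFun v := (fun m => sInf (mSet E (OrderDual.ofDual v.2) m),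
    OrderDual.toDual (fun w => sInf (wSet E v.1 w)))
  monotone' := by
    rintro ⟨vM, vW⟩ ⟨vM', vW'⟩ ⟨h1, h2⟩
    have h2' : ∀ w, OrderDual.ofDual vW' w ≤ OrderDual.ofDual vW w := fun w => h2 w
    constructor
    · intro m
      refine sInf_le_sInf ?_
      rintro x ⟨w, r, s, rfl, h₁, h₂, h₃⟩
      exact ⟨w, r, s, rfl, h₁, h₂, h₃.trans (h2' w)⟩
    · intro w
      refine sInf_le_sInf ?_
      rintro x ⟨m, s, r, rfl, h₁, h₂, h₃⟩
      exact ⟨m, s, r, rfl, h₁, h₂, h₃.trans (h1 m)⟩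

theorem sInf_mem_of_ne_top {S : Set ℕ∞} (h : sInf S ≠ ⊤) : sInf S ∈ S := by
  refine csInf_mem ?_
  by_contra hc
  rw [Set.not_nonempty_iff_eq_empty] at hc
  simp [hc] at h

end StableAux

open MarriageMarket StableAux in
/-- In any (possibly infinite) one-to-one marriage market with preference lists of
order type at most ω, a stable matching exists. -/
theorem stable_matching_exists_infinite {M W : Type*} (E : MarriageMarket M W) :
    ∃ μ : M → Option W, Stable E μ := by
  classical
  -- the fixed point of the monotone operator
  obtain ⟨⟨vM, vWd⟩, hfix⟩ : ∃ v, F E v = v := ⟨OrderHom.lfp (F E), OrderHom.map_lfp (F E)⟩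
  set vW : W → ℕ∞ := OrderDual.ofDual vWd with hvW
  have hM : ∀ m, vM m = sInf (mSet E vW m) := by
    intro m; exact (congrFun (congrArg Prod.fst hfix) m).symm
  have hW : ∀ w, vW w = sInf (wSet E vM w) := by
    intro w
    exact (congrFun (congrArg (fun p => OrderDual.ofDual p.2) hfix) w).symm
  -- if vM m is attained, the witnessing woman's aspiration is also pinned down
  have keyM : ∀ m, vM m ≠ ⊤ →
      ∃ (w : W) (r s : ℕ), vM m = (r : ℕ∞) ∧ E.mPref m w = some r ∧ E.wPref w m = some s ∧
        vW w = (s : ℕ∞) := by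
    intro m hm
    rw [hM m] at hm ⊢
    obtain ⟨w, r, s, hx, h1, h2, h3⟩ := sInf_mem_of_ne_top hm
    refine ⟨w, r, s, hx, h1, h2, le_antisymm ?_ h3⟩
    rw [hW w]
    exact sInf_le ⟨m, s, r, rfl, h2, h1, by rw [hM m, hx]⟩
  -- define the matching
  have hex : ∀ m, ∃ o : Option W, (o = none ∧ vM m = ⊤) ∨
      ∃ (w : W) (r s : ℕ), o = some w ∧ vM m = (r : ℕ∞) ∧ E.mPref m w = some r ∧
        E.wPref w m = some s ∧ vW w = (s : ℕ∞) := by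
    intro m
    by_cases hm : vM m = ⊤
    · exact ⟨none, Or.inl ⟨rfl, hm⟩⟩
    · obtain ⟨w, r, s, h⟩ := keyM m hm
      exact ⟨some w, Or.inr ⟨w, r, s, rfl, h⟩⟩
  choose μ hμ using hex
  -- basic facts about μ
  have hsome : ∀ m w, μ m = some w →
      ∃ (r s : ℕ), vM m = (r : ℕ∞) ∧ E.mPref m w = some r ∧ E.wPref w m = some s ∧
        vW w = (s : ℕ∞) := by
    intro m w hmw
    rcases hμ m with ⟨h0, _⟩ | ⟨w', r, s, h0, h⟩
    · simp [hmw] at h0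
    · rw [hmw] at h0
      obtain rfl : w' = w := by injection h0.symm
      exact ⟨r, s, h⟩
  have hnone : ∀ m, μ m = none → vM m = ⊤ := by
    intro m hm
    rcases hμ m with ⟨_, h⟩ | ⟨w', r, s, h0, _⟩
    · exact h
    · rw [hm] at h0; exact absurd h0 (by simp)
  -- if a woman's aspiration is attained she is matched
  have keyW : ∀ w, vW w ≠ ⊤ → ∃ m, μ m = some w := by
    intro w hw
    rw [hW w] at hw
    obtain ⟨m, s, r, hx, h1, h2, h3⟩ := sInf_mem_of_ne_top hw
    have hle : vM m ≤ (r : ℕ∞) := by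
      rw [hM m]
      refine sInf_le ⟨w, r, s, rfl, h2, h1, ?_⟩
      rw [hW w, ← hx]
    have hvm : vM m = (r : ℕ∞) := le_antisymm hle h3
    have hmt : vM m ≠ ⊤ := by rw [hvm]; exact (WithTop.coe_ne_top)
    refine ⟨m, ?_⟩
    rcases hμ m with ⟨_, h⟩ | ⟨w', r', s', h0, hv', hp', _, _⟩
    · exact absurd h hmt
    · have : (r' : ℕ∞) = (r : ℕ∞) := by rw [← hv', hvm]
      have : r' = r := by exact_mod_cast this
      rw [this] at hp'
      rw [E.mPref_inj m w' w r hp' h2] at h0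
      exact h0
  refine ⟨μ, ?_, ?_, ?_⟩
  · -- matching
    intro m m' w hm hm'
    obtain ⟨r, s, _, _, hws, hvw⟩ := hsome m w hm
    obtain ⟨r', s', _, _, hws', hvw'⟩ := hsome m' w hm'
    have : (s : ℕ∞) = (s' : ℕ∞) := by rw [← hvw, ← hvw']
    have : s = s' := by exact_mod_cast this
    subst this
    exact E.wPref_inj w m m' s hws hws'
  · -- individual rationality
    intro m w hm
    obtain ⟨r, s, _, h1, h2, _⟩ := hsome m w hm
    exact ⟨by rw [h1]; simp, by rw [h2]; simp⟩
  · -- no blocking pair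
    intro m w hB
    obtain ⟨⟨r, hr, hrc⟩, ⟨s, hs, hsc⟩⟩ := hB
    -- m strictly prefers w to his assignment: ↑r < vM m
    have hlt : (r : ℕ∞) < vM m := by
      rcases hrc with h0 | ⟨w', r', h0, h1, h2⟩
      · rw [hnone m h0]; exact WithTop.coe_lt_top r
      · obtain ⟨r₀, s₀, hv₀, hp₀, _, _⟩ := hsome m w' h0
        have : r' = r₀ := by
          injection hp₀.symm.trans h1 with h; exact h.symm
        rw [hv₀, ← this]
        exact_mod_cast h2
    -- w weakly tolerates m: ↑s ≤ vW w
    have hle : (s : ℕ∞) ≤ vW w := by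
      rcases hsc with h0 | ⟨m', s', h0, h1, h2⟩
      · have : vW w = ⊤ := by
          by_contra hc
          obtain ⟨m', hm'⟩ := keyW w hc
          exact h0 m' hm'
        rw [this]; exact le_top
      · obtain ⟨r₀, s₀, _, _, hws₀, hvw₀⟩ := hsome m' w h0
        have : s' = s₀ := by
          injection hws₀.symm.trans h1 with h; exact h.symm
        rw [hvw₀, ← this]
        exact_mod_cast h2.le
    -- then ↑r ∈ mSet, contradicting hlt
    have : vM m ≤ (r : ℕ∞) := by
      rw [hM m]
      exact sInf_le ⟨w, r, s, rfl, hr, hs, hle⟩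
    exact absurd hlt (not_lt.mpr this)
end

section
/- In any finite one-to-one marriage market with strict preferences, a stable matching exists. -/
namespace GaleShapley

variable {M W : Type*} (E : MarriageMarket M W)

lemma nat_min {P : ℕ → Prop} (h : ∃ r, P r) : ∃ r, P r ∧ ∀ r', P r' → r ≤ r' := by
  classical
  exact ⟨Nat.find h, Nat.find_spec h, fun r' hr' => Nat.find_min' h hr'⟩

/-- `m` would currently propose to `w`, given rejection sets `R`. -/
def ProposesTo (R : M → Finset W) (m : M) (w : W) : Prop :=
  w ∉ R m ∧ ∃ r, E.mPref m w = some r ∧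
    ∀ w' r', w' ∉ R m → E.mPref m w' = some r' → r ≤ r'

open Classical in
noncomputable def propose (R : M → Finset W) (m : M) : Option W :=
  if h : ∃ w, ProposesTo E R m w then some h.choose else none

lemma propose_spec {R : M → Finset W} {m : M} {w : W} (h : propose E R m = some w) :
    ProposesTo E R m w := by
  unfold propose at h
  split_ifs at h with h'
  · rw [Option.some_inj] at h
    exact h ▸ h'.choose_spec

lemma propose_ne_none {R : M → Finset W} {m : M} {w : W} {r : ℕ}
    (hw : w ∉ R m) (hr : E.mPref m w = some r) : ∃ w', propose E R m = some w' := by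
  have h : ∃ w', ProposesTo E R m w' := by
    obtain ⟨r0, ⟨w0, hw0, hw0r⟩, hmin⟩ :=
      nat_min (P := fun r => ∃ w, w ∉ R m ∧ E.mPref m w = some r) ⟨r, w, hw, hr⟩
    exact ⟨w0, hw0, r0, hw0r, fun w' r' hw' hr' => hmin r' ⟨w', hw', hr'⟩⟩
  rw [propose, dif_pos h]
  exact ⟨_, rfl⟩

lemma propose_congr {R R' : M → Finset W} {m : M} (h : R m = R' m) :
    propose E R m = propose E R' m := by
  unfold propose ProposesTo
  rw [h]

/-- Woman `w` rejects man `m` (a current suitor she either finds unacceptable or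
for whom she has a strictly better current suitor). -/
def Rejects (R : M → Finset W) (w : W) (m : M) : Prop :=
  propose E R m = some w ∧ (E.wPref w m = none ∨
    ∃ m' r r', propose E R m' = some w ∧ E.wPref w m' = some r' ∧
      E.wPref w m = some r ∧ r' < r)

open Classical in
noncomputable def step [Fintype W] (R : M → Finset W) : M → Finset W :=
  fun m => R m ∪ Finset.univ.filter (fun w => Rejects E R w m)

lemma mem_step [Fintype W] {R : M → Finset W} {m : M} {w : W} :
    w ∈ step E R m ↔ w ∈ R m ∨ Rejects E R w m := by
  classical
  simp [step]

lemma subset_step [Fintype W] (R : M → Finset W) (m : M) : R m ⊆ step E R m :=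
  fun w hw => (mem_step E).2 (Or.inl hw)

/-- The key invariant: any rejected man is rejected for a reason that persists. -/
def Inv (R : M → Finset W) : Prop :=
  ∀ m w, w ∈ R m → E.wPref w m = none ∨
    ∃ m' r r', propose E R m' = some w ∧ E.wPref w m' = some r' ∧
      E.wPref w m = some r ∧ r' < r

/-- Best suitor persists through a step. -/
lemma best_suitor [Fintype W] {R : M → Finset W} {w : W} {m' : M} {r' : ℕ}
    (hp : propose E R m' = some w) (hw' : E.wPref w m' = some r') :
    ∃ m₀ r₀, propose E (step E R) m₀ = some w ∧ E.wPref w m₀ = some r₀ ∧ r₀ ≤ r' := by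
  obtain ⟨r₀, ⟨m₀, hp₀, hw₀⟩, hmin⟩ :=
    nat_min (P := fun r => ∃ m₀, propose E R m₀ = some w ∧ E.wPref w m₀ = some r)
      ⟨r', m', hp, hw'⟩
  have hstep : step E R m₀ = R m₀ := by
    classical
    rw [step, Finset.union_eq_left]
    intro w'' hw''
    rw [Finset.mem_filter] at hw''
    obtain ⟨-, hpw'', hrej⟩ := hw''
    rw [hp₀] at hpw''
    rw [Option.some_inj] at hpw''
    subst hpw''
    rcases hrej with h | ⟨m₁, r, r₁, hp₁, hw₁, hwm₀, hlt⟩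
    · rw [h] at hw₀; exact absurd hw₀ (by simp)
    · rw [hwm₀] at hw₀
      rw [Option.some_inj] at hw₀
      subst hw₀
      exact absurd (hmin r₁ ⟨m₁, hp₁, hw₁⟩) (not_le.2 hlt)
  exact ⟨m₀, r₀, (propose_congr E hstep.symm ▸ hp₀ : _), hw₀, hmin r' ⟨m', hp, hw'⟩⟩

lemma inv_step [Fintype W] {R : M → Finset W} (hR : Inv E R) : Inv E (step E R) := by
  intro m w hw
  rw [mem_step] at hw
  have key : E.wPref w m = none ∨
      ∃ m' r r', propose E R m' = some w ∧ E.wPref w m' = some r' ∧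
        E.wPref w m = some r ∧ r' < r := by
    rcases hw with hw | ⟨-, h⟩
    · exact hR m w hw
    · rcases h with h | h
      · exact Or.inl h
      · exact Or.inr h
  rcases key with h | ⟨m', r, r', hp, hw', hwm, hlt⟩
  · exact Or.inl h
  · obtain ⟨m₀, r₀, hp₀, hw₀, hle⟩ := best_suitor E hp hw'
    exact Or.inr ⟨m₀, r, r₀, hp₀, hw₀, hwm, lt_of_le_of_lt hle hlt⟩

lemma exists_fixed [Fintype M] [Fintype W] :
    ∃ R : M → Finset W, step E R = R ∧ Inv E R := by
  classical
  set F : (M → Finset W) → (M → Finset W) := step E with hF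
  set seq : ℕ → (M → Finset W) := fun n => F^[n] (fun _ => ∅) with hseq
  have hseqsucc : ∀ n, seq (n + 1) = F (seq n) := by
    intro n; simp [hseq, Function.iterate_succ_apply']
  have hinv : ∀ n, Inv E (seq n) := by
    intro n
    induction n with
    | zero => intro m w hw; simp [hseq] at hw
    | succ n ih => rw [hseqsucc]; exact inv_step E ih
  by_cases hfix : ∃ n, F (seq n) = seq n
  · obtain ⟨n, hn⟩ := hfix
    exact ⟨seq n, hn, hinv n⟩
  · exfalso
    push_neg at hfix
    set c : ℕ → ℕ := fun n => ∑ m : M, (seq n m).card with hc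
    have hmono : StrictMono c := by
      apply strictMono_nat_of_lt_succ
      intro n
      rw [hc]
      simp only
      apply Finset.sum_lt_sum
      · intro m _
        exact Finset.card_le_card (by rw [hseqsucc]; exact subset_step E _ m)
      · have : seq n ≠ seq (n + 1) := by rw [hseqsucc]; exact fun h => hfix n h.symm
        obtain ⟨m, hm⟩ := Function.ne_iff.1 this
        refine ⟨m, Finset.mem_univ m, Finset.card_lt_card ?_⟩
        refine HasSubset.Subset.ssubset_of_ne ?_ hm
        rw [hseqsucc]; exact subset_step E _ m
    have hbd : ∀ n, c n ≤ Fintype.card M * Fintype.card W := by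
      intro n
      calc c n ≤ ∑ _m : M, Fintype.card W :=
            Finset.sum_le_sum (fun m _ => Finset.card_le_univ _)
        _ = Fintype.card M * Fintype.card W := by
            simp [Finset.sum_const, Finset.card_univ, Nat.smul_one_eq_cast]
    have h1 : Fintype.card M * Fintype.card W + 1 ≤ c (Fintype.card M * Fintype.card W + 1) :=
      hmono.le_apply
    have h2 := hbd (Fintype.card M * Fintype.card W + 1)
    omega

end GaleShapley

open GaleShapley

open MarriageMarket in
/-- In any finite one-to-one marriage market with strict preferences, a stable
matching exists (Gale–Shapley). -/
theorem stable_matching_exists_finite {M W : Type*} [Finite M] [Finite W]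
    (E : MarriageMarket M W) :
    ∃ μ : M → Option W, Stable E μ := by
  classical
  cases nonempty_fintype M
  cases nonempty_fintype W
  obtain ⟨R, hfix, hinv⟩ := GaleShapley.exists_fixed E
  have hnorej : ∀ m w, propose E R m = some w →
      E.wPref w m ≠ none ∧ ¬∃ m' r r', propose E R m' = some w ∧
        E.wPref w m' = some r' ∧ E.wPref w m = some r ∧ r' < r := by
    intro m w hp
    have hnotin := (propose_spec E hp).1
    have hnr : ¬ Rejects E R w m := fun hr =>
      hnotin (by rw [← hfix]; exact (mem_step E).2 (Or.inr hr))
    exact ⟨fun h => hnr ⟨hp, Or.inl h⟩, fun h => hnr ⟨hp, Or.inr h⟩⟩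
  have hmatch : IsMatching (propose E R) := by
    intro m m' w hm hm'
    obtain ⟨s, hs⟩ := Option.ne_none_iff_exists'.1 (hnorej m w hm).1
    obtain ⟨s', hs'⟩ := Option.ne_none_iff_exists'.1 (hnorej m' w hm').1
    rcases lt_trichotomy s s' with h | h | h
    · exact absurd ⟨m, s', s, hm, hs, hs', h⟩ (hnorej m' w hm').2
    · exact E.wPref_inj w m m' s hs (h ▸ hs')
    · exact absurd ⟨m', s, s', hm', hs', hs, h⟩ (hnorej m w hm).2
  refine ⟨propose E R, hmatch, ?_, ?_⟩
  · intro m w hp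
    refine ⟨?_, (hnorej m w hp).1⟩
    obtain ⟨-, r, hr, -⟩ := propose_spec E hp
    intro h; rw [h] at hr; cases hr
  · rintro m w ⟨⟨r, hmw, hpref⟩, s, hwm, hwpref⟩
    have hwR : w ∈ R m := by
      by_contra hwR
      obtain ⟨w0, hw0⟩ := propose_ne_none E hwR hmw
      obtain ⟨-, r0, hr0, hmin⟩ := propose_spec E hw0
      have hr0le : r0 ≤ r := hmin w r hwR hmw
      rcases hpref with h | ⟨w', r', hw', hw'r, hlt⟩
      · rw [hw0] at h; cases h
      · rw [hw0] at hw'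
        obtain rfl := Option.some_inj.1 hw'
        rw [hw'r] at hr0
        have : r' = r0 := Option.some_inj.1 hr0
        omega
    rcases hinv m w hwR with h | ⟨m', r₀, r', hp', hw', hwm', hlt⟩
    · rw [h] at hwm; cases hwm
    · have hr₀s : r₀ = s := by rw [hwm] at hwm'; exact (Option.some_inj.1 hwm').symm
      rcases hwpref with h | ⟨m'', r'', hm'', hw'', hlt'⟩
      · exact h m' hp'
      · obtain rfl := hmatch m'' m' w hm'' hp'
        rw [hw'] at hw''
        have : r' = r'' := Option.some_inj.1 hw''
        omega
end

section
/- In any (possibly infinite) one-to-one marriage market in which each agent's preference list has order type at most ω, there exists a man-optimal stable matching: a stable matching μ* such that every man weakly prefers his outcome under μ* to his outcome under any other stable matching. -/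
/-!
Run simultaneous deferred acceptance for ω rounds: every man proposes to his favourite woman among
those who have not yet rejected him, and every woman rejects each proposer who is unacceptable to
her or beaten by another proposer. Rejections only accumulate; the limit matching gives each man his
favourite woman who never rejects him. Only finitely many women rank above her, so from some round
on he proposes to her for good. The best-ranked man ever to propose to a woman is never rejected by
her, so she ends up with him; this yields stability. A woman never rejects a stable partner, since
the man she prefers would block with her; this yields man-optimality.
-/

namespace MarriageMarket

section DeferredAcceptance

open Filter

variable {M W : Type*} (E : MarriageMarket M W)

/-- `w` is `m`'s favourite acceptable woman among those `w'` with `¬ R m w'`; when `R` records the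
rejections so far, she is the woman `m` proposes to. -/
def Proposes (R : M → W → Prop) (m : M) (w : W) : Prop :=
  ∃ r, E.mPref m w = some r ∧ ¬ R m w ∧
    ∀ w' r', E.mPref m w' = some r' → r' < r → R m w'

def RejectedBy : ℕ → M → W → Prop
  | 0, _, _ => False
  | n + 1, m, w => RejectedBy n m w ∨ (E.Proposes (RejectedBy n) m w ∧
      (E.wPref w m = none ∨ ∃ m' r' r, E.Proposes (RejectedBy n) m' w ∧
        E.wPref w m' = some r' ∧ E.wPref w m = some r ∧ r' < r))

def Rejected (m : M) (w : W) : Prop :=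
  ∃ n, E.RejectedBy n m w

open Classical in
noncomputable def deferredAcceptance (m : M) : Option W :=
  if h : ∃ w, E.Proposes E.Rejected m w then some h.choose else none

theorem rejectedBy_mono : Monotone E.RejectedBy :=
  monotone_nat_of_le_succ fun _ _ _ => Or.inl

theorem finite_setOf_mPref_lt (m : M) (r : ℕ) :
    {w | ∃ r', E.mPref m w = some r' ∧ r' < r}.Finite :=
  Set.Finite.of_injOn (f := E.mPref m) (t := some '' Set.Iio r)
    (fun _ ⟨r', hr', hlt⟩ => ⟨r', hlt, hr'.symm⟩)
    (fun w ⟨r', hr', _⟩ w' _ h => E.mPref_inj m w w' r' hr' (h ▸ hr'))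
    ((Set.finite_Iio r).image some)

variable {E}

theorem Proposes.unique {R : M → W → Prop} {m : M} {w w' : W}
    (h : E.Proposes R m w) (h' : E.Proposes R m w') : w = w' := by
  obtain ⟨r, hr, hnR, hbetter⟩ := h
  obtain ⟨r', hr', hnR', hbetter'⟩ := h'
  rcases lt_trichotomy r r' with hlt | rfl | hgt
  · exact absurd (hbetter' w r hr hlt) hnR
  · exact E.mPref_inj m w w' r hr hr'
  · exact absurd (hbetter w' r' hr' hgt) hnR'

theorem exists_proposes {R : M → W → Prop} {m : M} {w : W} {r : ℕ}
    (hr : E.mPref m w = some r) (hnR : ¬ R m w) : ∃ w', E.Proposes R m w' := by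
  classical
  have hex : ∃ k w, E.mPref m w = some k ∧ ¬ R m w := ⟨r, w, hr, hnR⟩
  obtain ⟨w₀, hw₀, hnR₀⟩ := Nat.find_spec hex
  exact ⟨w₀, _, hw₀, hnR₀, fun w' r' hr' hlt => by_contra fun hnR' =>
    Nat.find_min hex hlt ⟨w', hr', hnR'⟩⟩

theorem Proposes.of_le {R R' : M → W → Prop} {m : M} {w : W} (h : E.Proposes R m w)
    (hle : R ≤ R') (hnR' : ¬ R' m w) : E.Proposes R' m w :=
  let ⟨r, hr, _, hbetter⟩ := h
  ⟨r, hr, hnR', fun w' r' hr' hlt => hle m w' (hbetter w' r' hr' hlt)⟩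

theorem Proposes.manWeaklyPrefers {R : M → W → Prop} {m : M} {w : W} (h : E.Proposes R m w)
    {o : Option W} (ho : ∀ w', o = some w' → E.mPref m w' ≠ none ∧ ¬ R m w') :
    E.ManWeaklyPrefers m (some w) o := by
  obtain ⟨r, hr, -, hbetter⟩ := h
  cases o with
  | none => exact Or.inr ⟨w, rfl, r, hr, Or.inl rfl⟩
  | some w' =>
    obtain ⟨hacc', hnR'⟩ := ho w' rfl
    obtain ⟨r', hr'⟩ := Option.ne_none_iff_exists'.1 hacc'
    rcases lt_trichotomy r r' with hlt | rfl | hgt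
    · exact Or.inr ⟨w, rfl, r, hr, Or.inr ⟨w', r', rfl, hr', hlt⟩⟩
    · exact Or.inl (congrArg some (E.mPref_inj m w w' r hr hr'))
    · exact absurd (hbetter w' r' hr' hgt) hnR'

theorem deferredAcceptance_eq_some_iff {m : M} {w : W} :
    E.deferredAcceptance m = some w ↔ E.Proposes E.Rejected m w := by
  unfold deferredAcceptance
  split_ifs with h
  · exact ⟨fun hw => Option.some.inj hw ▸ h.choose_spec,
      fun hw => congrArg some (h.choose_spec.unique hw)⟩
  · exact ⟨nofun, fun hw => h ⟨w, hw⟩⟩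

theorem rejected_of_deferredAcceptance_eq_none {m : M} {w : W} {r : ℕ}
    (hm : E.deferredAcceptance m = none) (hr : E.mPref m w = some r) : E.Rejected m w := by
  by_contra hnR
  obtain ⟨w', hw'⟩ := exists_proposes hr hnR
  rw [deferredAcceptance_eq_some_iff.2 hw'] at hm
  exact Option.some_ne_none _ hm

theorem Proposes.eventually_rejectedBy {m : M} {w : W} (h : E.Proposes E.Rejected m w) :
    ∀ᶠ n in atTop, E.Proposes (E.RejectedBy n) m w ∧ ¬ E.RejectedBy (n + 1) m w := by
  obtain ⟨r, hr, hnR, hbetter⟩ := h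
  have hbetter_rejected : ∀ᶠ n in atTop,
      ∀ w' ∈ {w' | ∃ r', E.mPref m w' = some r' ∧ r' < r}, E.RejectedBy n m w' := by
    rw [eventually_all_finite (E.finite_setOf_mPref_lt m r)]
    rintro w' ⟨r', hr', hlt⟩
    obtain ⟨n, hn⟩ := hbetter w' r' hr' hlt
    exact eventually_atTop.2 ⟨n, fun k hk => E.rejectedBy_mono hk m w' hn⟩
  filter_upwards [hbetter_rejected] with n hn
  exact ⟨⟨r, hr, fun h => hnR ⟨n, h⟩, fun w' r' hr' hlt => hn w' ⟨r', hr', hlt⟩⟩,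
    fun h => hnR ⟨n + 1, h⟩⟩

theorem exists_wPref_le_of_proposes {n : ℕ} {m : M} {w : W}
    (hp : E.Proposes (E.RejectedBy n) m w) (hnr : ¬ E.RejectedBy (n + 1) m w) :
    ∃ r, E.wPref w m = some r ∧
      ∀ m' r', E.Proposes (E.RejectedBy n) m' w → E.wPref w m' = some r' → r ≤ r' := by
  cases hw : E.wPref w m with
  | none => exact absurd (Or.inr ⟨hp, Or.inl hw⟩) hnr
  | some r =>
    exact ⟨r, rfl, fun m' r' hp' hr' => not_lt.1 fun hlt =>
      hnr (Or.inr ⟨hp, Or.inr ⟨m', r', r, hp', hr', hw, hlt⟩⟩)⟩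

theorem exists_better_proposer_of_rejectedBy {n : ℕ} {m : M} {w : W} {r : ℕ}
    (hrej : E.RejectedBy n m w) (hr : E.wPref w m = some r) :
    ∃ k m₁ r₁, E.Proposes (E.RejectedBy k) m₁ w ∧
      E.wPref w m₁ = some r₁ ∧ r₁ < r := by
  induction n with
  | zero => exact hrej.elim
  | succ n ih =>
    rcases hrej with hrej | ⟨-, hnone | ⟨m₁, r₁, r', hp₁, hr₁, hr', hlt⟩⟩
    · exact ih hrej
    · exact absurd (hr.symm.trans hnone) (Option.some_ne_none r)
    · exact ⟨n, m₁, r₁, hp₁, hr₁, Option.some.inj (hr'.symm.trans hr) ▸ hlt⟩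

theorem deferredAcceptance_eq_some_of_forall_le {N : ℕ} {m : M} {w : W} {s : ℕ}
    (hp : E.Proposes (E.RejectedBy N) m w) (hs : E.wPref w m = some s)
    (hmin : ∀ k m' r', E.Proposes (E.RejectedBy k) m' w → E.wPref w m' = some r' → s ≤ r') :
    E.deferredAcceptance m = some w := by
  have hkeep : ∀ n, N ≤ n → E.Proposes (E.RejectedBy n) m w := by
    intro n hn
    induction n, hn using Nat.le_induction with
    | base => exact hp
    | succ n _ ih =>
      refine ih.of_le (E.rejectedBy_mono n.le_succ) ?_
      obtain ⟨-, -, hnr, -⟩ := ih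
      rintro (hrej | ⟨-, hnone | ⟨m', r', r, hp', hr', hr, hlt⟩⟩)
      · exact hnr hrej
      · exact absurd (hs.symm.trans hnone) (Option.some_ne_none s)
      · obtain rfl := Option.some.inj (hs.symm.trans hr)
        exact absurd (hmin n m' r' hp' hr') (not_le.2 hlt)
  obtain ⟨r, hr, -, hbetter⟩ := hp
  refine deferredAcceptance_eq_some_iff.2
    ⟨r, hr, ?_, fun w' r' hr' hlt => ⟨N, hbetter w' r' hr' hlt⟩⟩
  rintro ⟨n, hrej⟩
  obtain ⟨_, -, hnr, -⟩ := hkeep (max n N) (le_max_right n N)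
  exact hnr (E.rejectedBy_mono (le_max_left n N) m w hrej)

theorem exists_deferredAcceptance_le_of_proposes {k : ℕ} {m₁ : M} {w : W} {r₁ : ℕ}
    (hp : E.Proposes (E.RejectedBy k) m₁ w) (hr₁ : E.wPref w m₁ = some r₁) :
    ∃ m s, E.deferredAcceptance m = some w ∧ E.wPref w m = some s ∧ s ≤ r₁ := by
  classical
  have hex : ∃ s k m, E.Proposes (E.RejectedBy k) m w ∧ E.wPref w m = some s :=
    ⟨r₁, k, m₁, hp, hr₁⟩
  obtain ⟨N, m, hpN, hs⟩ := Nat.find_spec hex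
  exact ⟨m, _, deferredAcceptance_eq_some_of_forall_le hpN hs fun k m' r' hp' hr' =>
    Nat.find_min' hex ⟨k, m', hp', hr'⟩, hs, Nat.find_min' hex ⟨k, m₁, hp, hr₁⟩⟩

theorem deferredAcceptance_isMatching : IsMatching E.deferredAcceptance := by
  intro m m' w h h'
  obtain ⟨n, ⟨hp, hnr⟩, hp', hnr'⟩ :=
    ((deferredAcceptance_eq_some_iff.1 h).eventually_rejectedBy.and
      (deferredAcceptance_eq_some_iff.1 h').eventually_rejectedBy).exists
  obtain ⟨r, hr, hle⟩ := exists_wPref_le_of_proposes hp hnr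
  obtain ⟨r', hr', hle'⟩ := exists_wPref_le_of_proposes hp' hnr'
  obtain rfl := le_antisymm (hle m' r' hp' hr') (hle' m r hp hr)
  exact E.wPref_inj w m m' r hr hr'

theorem deferredAcceptance_acceptable {m : M} {w : W} (h : E.deferredAcceptance m = some w) :
    E.mPref m w ≠ none ∧ E.wPref w m ≠ none := by
  have hp := deferredAcceptance_eq_some_iff.1 h
  obtain ⟨n, hpn, hnr⟩ := hp.eventually_rejectedBy.exists
  obtain ⟨r, hr, -⟩ := hp
  obtain ⟨r', hr', -⟩ := exists_wPref_le_of_proposes hpn hnr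
  simp [hr, hr']

theorem rejected_of_manPrefers_deferredAcceptance {m : M} {w : W}
    (h : E.ManPrefers m w (E.deferredAcceptance m)) : E.Rejected m w := by
  obtain ⟨r, hr, hnone | ⟨w₀, r₀, hw₀, hr₀, hlt⟩⟩ := h
  · exact rejected_of_deferredAcceptance_eq_none hnone hr
  · obtain ⟨r₀', hr₀', -, hbetter⟩ := deferredAcceptance_eq_some_iff.1 hw₀
    obtain rfl := Option.some.inj (hr₀.symm.trans hr₀')
    exact hbetter w r hr hlt

theorem deferredAcceptance_stable : E.Stable E.deferredAcceptance := by
  refine ⟨deferredAcceptance_isMatching, fun m w => deferredAcceptance_acceptable, ?_⟩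
  rintro m w ⟨hman, r, hr, hwoman⟩
  obtain ⟨n, hrej⟩ := rejected_of_manPrefers_deferredAcceptance hman
  obtain ⟨k, m₁, r₁, hp₁, hr₁, hlt₁⟩ := exists_better_proposer_of_rejectedBy hrej hr
  obtain ⟨m₂, r₂, hm₂, hr₂, hle₂⟩ :=
    exists_deferredAcceptance_le_of_proposes hp₁ hr₁
  rcases hwoman with hfree | ⟨m', r', hm', hr', hlt'⟩
  · exact hfree m₂ hm₂
  · obtain rfl := deferredAcceptance_isMatching m' m₂ w hm' hm₂
    obtain rfl := Option.some.inj (hr'.symm.trans hr₂)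
    omega

theorem Stable.not_rejectedBy {ν : M → Option W} (hν : E.Stable ν) (n : ℕ) {m : M} {w : W}
    (hmw : ν m = some w) : ¬ E.RejectedBy n m w := by
  induction n generalizing m w with
  | zero => exact id
  | succ n ih =>
    rintro (hrej | ⟨-, hnone | ⟨m₁, r₁, r, hp₁, hr₁, hr, hlt⟩⟩)
    · exact ih hmw hrej
    · exact (hν.2.1 m w hmw).2 hnone
    · rcases hp₁.manWeaklyPrefers fun w' h => ⟨(hν.2.1 m₁ w' h).1, ih h⟩ with
        hm₁ | ⟨_, hw, hman⟩
      · obtain rfl := hν.1 m₁ m w hm₁.symm hmw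
        obtain rfl := Option.some.inj (hr₁.symm.trans hr)
        exact lt_irrefl _ hlt
      · obtain rfl := Option.some.inj hw
        exact hν.2.2 m₁ w ⟨hman, r₁, hr₁, Or.inr ⟨m, r, hmw, hr, hlt⟩⟩

theorem manWeaklyPrefers_deferredAcceptance {m : M} {o : Option W}
    (ho : ∀ w, o = some w → E.mPref m w ≠ none ∧ ¬ E.Rejected m w) :
    E.ManWeaklyPrefers m (E.deferredAcceptance m) o := by
  cases hm : E.deferredAcceptance m with
  | some w => exact (deferredAcceptance_eq_some_iff.1 hm).manWeaklyPrefers ho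
  | none =>
    cases o with
    | none => exact Or.inl rfl
    | some w =>
      obtain ⟨hacc, hnR⟩ := ho w rfl
      obtain ⟨r, hr⟩ := Option.ne_none_iff_exists'.1 hacc
      exact absurd (rejected_of_deferredAcceptance_eq_none hm hr) hnR

end DeferredAcceptance

end MarriageMarket

open MarriageMarket in
/-- In any (possibly infinite) one-to-one marriage market with preference lists of
order type at most ω, there exists a man-optimal stable matching: a stable matching
that every man weakly prefers to any other stable matching. -/
theorem man_optimal_stable_matching_exists {M W : Type*} (E : MarriageMarket M W) :
    ∃ μ : M → Option W, ManOptimal E μ :=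
  ⟨E.deferredAcceptance, deferredAcceptance_stable, fun _ hν m =>
    manWeaklyPrefers_deferredAcceptance fun w hw =>
      ⟨(hν.2.1 m w hw).1, fun ⟨n, h⟩ => hν.not_rejectedBy n hw h⟩⟩
end

section
/- If a man m̃ is matched to woman w̃ in some stable matching of a marriage market, then in the market obtained by replacing m̃'s preference list with the single-element list {w̃}, the man-optimal stable matching matches m̃ to w̃. -/
namespace MarriageMarket

variable {M W : Type*}

theorem manPrefers_congr {E E' : MarriageMarket M W} {m : M} (h : E'.mPref m = E.mPref m) :
    ManPrefers E' m = ManPrefers E m := by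
  unfold ManPrefers
  rw [h]

theorem womanPrefers_congr {E E' : MarriageMarket M W} (h : E'.wPref = E.wPref) :
    WomanPrefers E' = WomanPrefers E := by
  unfold WomanPrefers
  rw [h]

theorem not_manPrefers_of_unique_acceptable {E : MarriageMarket M W} {m : M} {wt : W}
    (honly : ∀ w, w ≠ wt → E.mPref m w = none) (w : W) : ¬ ManPrefers E m w (some wt) := by
  rintro ⟨r, hr, hnone | ⟨w', r', hw', hr', hlt⟩⟩
  · exact Option.some_ne_none _ hnone
  · obtain rfl := Option.some.inj hw'
    by_cases hw : w = wt
    · subst hw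
      rw [hr] at hr'
      exact absurd (Option.some.inj hr') hlt.ne
    · rw [honly w hw] at hr
      exact absurd hr.symm (Option.some_ne_none r)

theorem eq_of_manWeaklyPrefers_of_unique_acceptable {E : MarriageMarket M W} {m : M} {wt : W}
    (honly : ∀ w, w ≠ wt → E.mPref m w = none) {o : Option W}
    (h : ManWeaklyPrefers E m o (some wt)) : o = some wt := by
  rcases h with h | ⟨w, -, hpref⟩
  · exact h
  · exact absurd hpref (not_manPrefers_of_unique_acceptable honly w)

theorem Stable.of_mPref {E E' : MarriageMarket M W} {μ : M → Option W} (h : Stable E μ)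
    (hw : E'.wPref = E.wPref) (hacc : ∀ m w, μ m = some w → E'.mPref m w ≠ none)
    (hpref : ∀ m w, ManPrefers E' m w (μ m) → ManPrefers E m w (μ m)) : Stable E' μ := by
  obtain ⟨hmatch, hir, hnb⟩ := h
  refine ⟨hmatch, fun m w hmw => ⟨hacc m w hmw, hw ▸ (hir m w hmw).2⟩, ?_⟩
  rintro m w ⟨hman, hwoman⟩
  exact hnb m w ⟨hpref m w hman, womanPrefers_congr hw ▸ hwoman⟩

end MarriageMarket

open MarriageMarket in
/-- If man `mt` is matched to woman `wt` in some stable matching of the market `E`,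
then in the market `E'` obtained by replacing `mt`'s preference list with the
single-element list `{wt}` (all other preferences unchanged), the man-optimal stable
matching matches `mt` to `wt`. -/
theorem truncation_matches {M W : Type*} (E E' : MarriageMarket M W) (mt : M) (wt : W)
    (μ₀ : M → Option W) (h₀ : Stable E μ₀) (hm₀ : μ₀ mt = some wt)
    (hw : E'.wPref = E.wPref) (hm : ∀ m, m ≠ mt → E'.mPref m = E.mPref m)
    (ht1 : E'.mPref mt wt ≠ none) (ht2 : ∀ w, w ≠ wt → E'.mPref mt w = none)
    (μs : M → Option W) (hopt : ManOptimal E' μs) :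
    μs mt = some wt := by
  have hstable : Stable E' μ₀ := by
    refine h₀.of_mPref hw (fun m w hmw => ?_) (fun m w hpref => ?_)
    · by_cases hmt : m = mt
      · subst hmt
        rw [hm₀, Option.some_inj] at hmw
        exact hmw ▸ ht1
      · rw [hm m hmt]
        exact (h₀.2.1 m w hmw).1
    · by_cases hmt : m = mt
      · subst hmt
        rw [hm₀] at hpref ⊢
        exact absurd hpref (not_manPrefers_of_unique_acceptable ht2 w)
      · exact manPrefers_congr (hm m hmt) ▸ hpref
  exact eq_of_manWeaklyPrefers_of_unique_acceptable ht2 (hm₀ ▸ hopt.2 μ₀ hstable mt)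
end

section
/- Let X be a (possibly infinite) set and suppose we are given p_ā ∈ [0,1] for every finite sequence ā of distinct elements of X. Then there exists a probability measure μ on the space of strict total orders of X (with the σ-algebra generated by events {π : a_1 ≻_π ⋯ ≻_π a_n}) such that p_ā = Pr_μ[a_1 ≻ ⋯ ≻ a_n] for every such ā, if and only if p_{(a)} = 1 for every a ∈ X and, for every sequence (a_1,…,a_n) of distinct elements and every a ∉ {a_1,…,a_n}, p_{(a_1,…,a_n)} = Σ_{i=0}^{n} p_{(a_1,…,a_i,a,a_{i+1},…,a_n)}. -/
open MeasureTheory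

attribute [local instance] Classical.propDecidable

/-- The space of strict total orders on `X`: irreflexive, transitive relations under
which any two distinct elements are comparable. -/
def StrictTotalOrders (X : Type*) : Type _ :=
  {r : X → X → Prop //
    (∀ a, ¬ r a a) ∧ (∀ a b c, r a b → r b c → r a c) ∧ ∀ a b, a ≠ b → r a b ∨ r b a}

/-- The cylinder event that the elements of the list `l` appear in this relative
order: `{π : l₀ ≻_π l₁ ≻_π ⋯}`. -/
def chainEvent {X : Type*} (l : List X) : Set (StrictTotalOrders X) :=
  {π | l.Chain' π.1}

/-- The σ-algebra on the space of strict total orders generated by the cylinder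
events fixing the relative order of finitely many distinct elements. -/
instance ordersMeasurableSpace (X : Type*) : MeasurableSpace (StrictTotalOrders X) :=
  MeasurableSpace.generateFrom {s | ∃ l : List X, l.Nodup ∧ s = chainEvent l}

/-!
Necessity: the cylinder of `(a₁,…,a_n)` is the disjoint union, over the positions at which a
fresh `a` can be inserted, of the cylinders of the longer sequences.

Sufficiency: extend `p` by `p [] = 1`. Iterating the insertion identity, `p ā` is the sum of
`p m` over the linear extensions `m` of `ā` to any finite `S ⊇ ā`; refining two cylinders to a
common `S` shows that `p` is finitely additive and monotone on cylinders. Sending an order to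
its indicator in the compact space `Bool^(X × X)` makes the orders a compact space in which the
cylinders are clopen, so a countable cover of a cylinder by cylinders has a finite subcover.
This makes the outer measure generated by `p` agree with `p` on cylinders, and the refinement
argument shows that cylinders are Carathéodory measurable.
-/

open List
open scoped ENNReal

namespace List

variable {α : Type*} {l : List α} {a : α} {i : ℕ}

theorem Nodup.insertIdx (hl : l.Nodup) (ha : a ∉ l) (hi : i ≤ l.length) :
    (l.insertIdx i a).Nodup :=
  (perm_insertIdx a l hi).nodup_iff.2 (nodup_cons.2 ⟨ha, hl⟩)

theorem insertIdx_ne_nil (hi : i ≤ l.length) : l.insertIdx i a ≠ [] :=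
  ne_nil_of_mem ((mem_insertIdx hi).2 (Or.inl rfl))

end List

namespace StrictTotalOrders

variable {X : Type*}

instance (π : StrictTotalOrders X) : IsStrictTotalOrder X π.1 where
  irrefl := π.2.1
  trans := π.2.2.1
  trichotomous a b hab hba := by
    by_contra h
    exact (π.2.2.2 a b h).elim hab hba

def comap {β : Type*} [LinearOrder β] (f : X → β) (hf : Function.Injective f) :
    StrictTotalOrders X :=
  ⟨fun a b => f a < f b, fun _ => lt_irrefl _, fun _ _ _ => lt_trans,
    fun _ _ h => lt_or_gt_of_ne (hf.ne h)⟩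

section Cylinders

variable {π : StrictTotalOrders X} {l m : List X} {a : X}

theorem mem_chainEvent_iff_pairwise : π ∈ chainEvent l ↔ l.Pairwise π.1 :=
  isChain_iff_pairwise

theorem chainEvent_nil : chainEvent ([] : List X) = Set.univ :=
  Set.eq_univ_of_forall fun _ => isChain_nil

theorem chainEvent_singleton (a : X) : chainEvent [a] = Set.univ :=
  Set.eq_univ_of_forall fun _ => isChain_singleton a

theorem measurableSet_chainEvent (hl : l.Nodup) : MeasurableSet (chainEvent l) :=
  MeasurableSpace.measurableSet_generateFrom ⟨l, hl, rfl⟩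

theorem chainEvent_nonempty (hl : l.Nodup) : (chainEvent l).Nonempty := by
  let _ : LinearOrder X := IsWellOrder.linearOrder WellOrderingRel
  -- `idxOf` sends the elements outside `l` to `l.length`, so they all come after `l`.
  refine ⟨comap (fun x => toLex (l.idxOf x, x)) fun x y h => congrArg (·.2) h,
    isChain_iff_getElem.2 fun i hi => ?_⟩
  change toLex (l.idxOf l[i], l[i]) < toLex (l.idxOf l[i + 1], l[i + 1])
  rw [hl.idxOf_getElem, hl.idxOf_getElem]
  exact Prod.Lex.toLex_lt_toLex.2 (Or.inl i.lt_succ_self)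

theorem mem_chainEvent_iff_sublist (hπ : π ∈ chainEvent m) (hlm : l ⊆ m) :
    π ∈ chainEvent l ↔ l <+ m := by
  refine ⟨fun h => ?_, fun h => hπ.sublist h⟩
  rw [mem_chainEvent_iff_pairwise] at h hπ
  exact sublist_of_subperm_of_pairwise (subperm_of_subset h.nodup hlm) h hπ

theorem exists_mem_chainEvent_insertIdx (ha : a ∉ l) (hπ : π ∈ chainEvent l) :
    ∃ i ≤ l.length, π ∈ chainEvent (l.insertIdx i a) := by
  induction l with
  | nil => exact ⟨0, le_rfl, chainEvent_singleton a ▸ Set.mem_univ π⟩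
  | cons b l ih =>
    rw [mem_chainEvent_iff_pairwise, pairwise_cons] at hπ
    obtain ⟨hab, hal⟩ := not_or.1 (mt mem_cons.2 ha)
    rcases π.2.2.2 a b hab with hab | hba
    · refine ⟨0, Nat.zero_le _, ?_⟩
      rw [insertIdx_zero, mem_chainEvent_iff_pairwise, pairwise_cons]
      exact ⟨forall_mem_cons.2 ⟨hab, fun x hx => _root_.trans hab (hπ.1 x hx)⟩,
        pairwise_cons.2 hπ⟩
    · obtain ⟨i, hi, hπi⟩ := ih hal (mem_chainEvent_iff_pairwise.2 hπ.2)
      refine ⟨i + 1, Nat.succ_le_succ hi, ?_⟩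
      rw [insertIdx_succ_cons, mem_chainEvent_iff_pairwise, pairwise_cons]
      refine ⟨fun x hx => ?_, mem_chainEvent_iff_pairwise.1 hπi⟩
      rcases (mem_insertIdx hi).1 hx with rfl | hx
      exacts [hba, hπ.1 x hx]

theorem chainEvent_eq_biUnion_insertIdx (ha : a ∉ l) :
    chainEvent l = ⋃ i ∈ Finset.range (l.length + 1), chainEvent (l.insertIdx i a) := by
  ext π
  simp only [Set.mem_iUnion, Finset.mem_range_succ_iff, exists_prop]
  exact ⟨exists_mem_chainEvent_insertIdx ha,
    fun ⟨i, _, hπ⟩ => IsChain.sublist hπ (sublist_insertIdx l i a)⟩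

theorem pairwiseDisjoint_chainEvent_insertIdx (ha : a ∉ l) :
    (Finset.range (l.length + 1) : Set ℕ).PairwiseDisjoint
      fun i => chainEvent (l.insertIdx i a) := by
  intro i hi j hj hij
  simp only [Finset.coe_range, Set.mem_Iio, Nat.lt_succ_iff] at hi hj
  refine Set.disjoint_left.2 fun π hπi hπj => hij ?_
  refine injOn_insertIdx_index_of_notMem l a ha hi hj ?_
  rw [mem_chainEvent_iff_pairwise] at hπi hπj
  exact hπi.eq_of_mem_iff hπj fun x => by rw [mem_insertIdx hi, mem_insertIdx hj]

theorem measure_chainEvent_eq_sum_insertIdx (μ : Measure (StrictTotalOrders X)) (hl : l.Nodup)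
    (ha : a ∉ l) :
    μ (chainEvent l) = ∑ i ∈ Finset.range (l.length + 1), μ (chainEvent (l.insertIdx i a)) := by
  rw [chainEvent_eq_biUnion_insertIdx ha]
  exact measure_biUnion_finset (pairwiseDisjoint_chainEvent_insertIdx ha) fun i hi =>
    measurableSet_chainEvent (hl.insertIdx ha (Finset.mem_range_succ_iff.1 hi))

theorem exists_mem_chainEvent_toFinset_eq (π : StrictTotalOrders X) (S : Finset X) :
    ∃ m : List X, m.Nodup ∧ m.toFinset = S ∧ π ∈ chainEvent m := by
  induction S using Finset.induction with
  | empty => exact ⟨[], nodup_nil, rfl, chainEvent_nil ▸ Set.mem_univ π⟩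
  | insert a S ha ih =>
    obtain ⟨m, hm, rfl, hπ⟩ := ih
    have ham : a ∉ m := by simpa using ha
    obtain ⟨i, hi, hπi⟩ := exists_mem_chainEvent_insertIdx ham hπ
    refine ⟨m.insertIdx i a, hm.insertIdx ham hi, ?_, hπi⟩
    rw [toFinset_eq_of_perm _ _ (perm_insertIdx a m hi), toFinset_cons]

end Cylinders

section Topology

open Topology

noncomputable def toBoolRel (π : StrictTotalOrders X) : X → X → Bool := fun a b => π.1 a b

noncomputable instance : TopologicalSpace (StrictTotalOrders X) := .induced toBoolRel inferInstance

theorem isClopen_setOf_apply_apply (a b : X) : IsClopen {f : X → X → Bool | f a b} :=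
  (isClopen_discrete {true}).preimage (by fun_prop)

theorem range_toBoolRel : Set.range (toBoolRel (X := X)) =
    {f | (∀ a, ¬ f a a) ∧ (∀ a b c, f a b → f b c → f a c) ∧ ∀ a b, a ≠ b → f a b ∨ f b a} := by
  ext f
  constructor
  · rintro ⟨π, rfl⟩
    simpa [toBoolRel] using π.2
  · rintro ⟨hirr, htr, htot⟩
    exact ⟨⟨fun a b => f a b, hirr, htr, htot⟩, by ext; simp [toBoolRel]⟩

theorem isClosedEmbedding_toBoolRel : IsClosedEmbedding (toBoolRel (X := X)) where
  eq_induced := rfl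
  injective π σ h := Subtype.ext <| by
    ext a b
    simpa [toBoolRel] using congrFun (congrFun h a) b
  isClosed_range := by
    rw [range_toBoolRel]
    simp only [Set.ofPred_and, Set.ofPred_forall]
    refine .inter (isClosed_iInter fun a => (isClopen_setOf_apply_apply a a).isOpen.isClosed_compl)
      (.inter (isClosed_iInter fun a => isClosed_iInter fun b => isClosed_iInter fun c =>
        isClosed_imp (isClopen_setOf_apply_apply a b).isOpen <|
          isClosed_imp (isClopen_setOf_apply_apply b c).isOpen
            (isClopen_setOf_apply_apply a c).isClosed)
      (isClosed_iInter fun a => isClosed_iInter fun b => isClosed_iInter fun _ =>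
        (isClopen_setOf_apply_apply a b).isClosed.union (isClopen_setOf_apply_apply b a).isClosed))

instance : CompactSpace (StrictTotalOrders X) :=
  isClosedEmbedding_toBoolRel.compactSpace

theorem isClopen_chainEvent : ∀ l : List X, IsClopen (chainEvent l)
  | [] => chainEvent_nil ▸ isClopen_univ
  | [a] => chainEvent_singleton a ▸ isClopen_univ
  | a :: b :: l => by
    have h : chainEvent (a :: b :: l) = {π | π.1 a b} ∩ chainEvent (b :: l) := by
      ext π; exact isChain_cons_cons
    rw [h]
    refine .inter ?_ (isClopen_chainEvent (b :: l))
    simpa [toBoolRel] using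
      (isClopen_setOf_apply_apply a b).preimage isClosedEmbedding_toBoolRel.continuous

end Topology

section LinearExtensions

variable {S : Finset X} {l m : List X} {a : X}

noncomputable def linearExtensions (S : Finset X) (l : List X) : Finset (List X) :=
  {m ∈ S.toList.permutations.toFinset | l <+ m}

theorem mem_linearExtensions :
    m ∈ linearExtensions S l ↔ m.Nodup ∧ m.toFinset = S ∧ l <+ m := by
  simp only [linearExtensions, Finset.mem_filter, mem_toFinset, mem_permutations, ← and_assoc]
  refine and_congr_left' ⟨fun h => ⟨h.nodup_iff.2 S.nodup_toList, ?_⟩, fun ⟨hm, hmS⟩ => ?_⟩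
  · rw [toFinset_eq_of_perm _ _ h, Finset.toList_toFinset]
  · exact perm_of_nodup_nodup_toFinset_eq hm S.nodup_toList (by rw [hmS, Finset.toList_toFinset])

theorem linearExtensions_toFinset (hl : l.Nodup) : linearExtensions l.toFinset l = {l} := by
  ext m
  rw [mem_linearExtensions, Finset.mem_singleton]
  refine ⟨fun ⟨hm, hml, hlm⟩ => (hlm.eq_of_length ?_).symm, by rintro rfl; exact ⟨hl, rfl, .refl m⟩⟩
  rw [← toFinset_card_of_nodup hl, ← toFinset_card_of_nodup hm, hml]

theorem linearExtensions_eq_biUnion_insertIdx (haS : a ∈ S) (hal : a ∉ l) :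
    linearExtensions S l =
      (Finset.range (l.length + 1)).biUnion fun i => linearExtensions S (l.insertIdx i a) := by
  ext m
  simp only [Finset.mem_biUnion, Finset.mem_range_succ_iff, mem_linearExtensions]
  constructor
  · rintro ⟨hm, rfl, hlm⟩
    obtain ⟨π, hπ⟩ := chainEvent_nonempty hm
    obtain ⟨i, hi, hπi⟩ := exists_mem_chainEvent_insertIdx hal (hπ.sublist hlm)
    refine ⟨i, hi, hm, rfl, (mem_chainEvent_iff_sublist hπ fun x hx => ?_).1 hπi⟩
    rcases (mem_insertIdx hi).1 hx with rfl | hx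
    exacts [by simpa using haS, hlm.subset hx]
  · rintro ⟨i, -, hm, hmS, him⟩
    exact ⟨hm, hmS, (sublist_insertIdx l i a).trans him⟩

theorem pairwiseDisjoint_linearExtensions_insertIdx (hal : a ∉ l) :
    (Finset.range (l.length + 1) : Set ℕ).PairwiseDisjoint
      fun i => linearExtensions S (l.insertIdx i a) := by
  intro i hi j hj hij
  refine Finset.disjoint_left.2 fun m hmi hmj => ?_
  rw [mem_linearExtensions] at hmi hmj
  obtain ⟨π, hπ⟩ := chainEvent_nonempty hmi.1
  exact Set.disjoint_left.1 (pairwiseDisjoint_chainEvent_insertIdx hal hi hj hij)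
    (hπ.sublist hmi.2.2) (hπ.sublist hmj.2.2)

end LinearExtensions

structure IsConsistent (q : List X → ℝ) : Prop where
  nonneg : ∀ l : List X, l.Nodup → 0 ≤ q l
  eq_sum_insertIdx : ∀ (l : List X) (a : X), l.Nodup → a ∉ l →
    q l = ∑ i ∈ Finset.range (l.length + 1), q (l.insertIdx i a)

theorem isConsistent_ite_nil {p : List X → ℝ} (hp : ∀ l : List X, l.Nodup → 0 ≤ p l)
    (hone : ∀ a : X, p [a] = 1)
    (hsum : ∀ (l : List X) (a : X), l.Nodup → l ≠ [] → a ∉ l →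
      p l = ∑ i ∈ Finset.range (l.length + 1), p (l.insertIdx i a)) :
    IsConsistent fun l => if l = [] then 1 else p l where
  nonneg l hl := by
    split_ifs
    exacts [zero_le_one, hp l hl]
  eq_sum_insertIdx l a hl ha := by
    rcases eq_or_ne l [] with rfl | hl0
    · simp [hone]
    rw [if_neg hl0, hsum l a hl hl0 ha]
    exact Finset.sum_congr rfl fun i hi =>
      (if_neg (insertIdx_ne_nil (Finset.mem_range_succ_iff.1 hi))).symm

noncomputable def chainContent (q : List X → ℝ) (s : Set (StrictTotalOrders X)) : ℝ≥0∞ :=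
  if s = ∅ then 0 else ⨅ (l : List X) (_ : l.Nodup ∧ s = chainEvent l), ENNReal.ofReal (q l)

noncomputable def chainOuterMeasure (q : List X → ℝ) : OuterMeasure (StrictTotalOrders X) :=
  OuterMeasure.ofFunction (chainContent q) (if_pos rfl)

theorem chainContent_trichotomy (q : List X → ℝ) (s : Set (StrictTotalOrders X)) :
    s = ∅ ∨ chainContent q s = ⊤ ∨ ∃ c : List X, c.Nodup ∧ s = chainEvent c := by
  by_cases hs : s = ∅
  · exact Or.inl hs
  by_cases h : ∃ c : List X, c.Nodup ∧ s = chainEvent c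
  · exact Or.inr (Or.inr h)
  refine Or.inr (Or.inl ?_)
  push Not at h
  simp only [chainContent, if_neg hs]
  exact iInf₂_eq_top.2 fun c hc => absurd hc.2 (h c hc.1)

namespace IsConsistent

variable {q : List X → ℝ} {c l m : List X}

theorem sum_linearExtensions {S : Finset X} {l : List X} (hq : IsConsistent q) (hl : l.Nodup)
    (hlS : ∀ x ∈ l, x ∈ S) : ∑ m ∈ linearExtensions S l, q m = q l := by
  by_cases hSl : ∀ x ∈ S, x ∈ l
  · obtain rfl : l.toFinset = S := Finset.ext fun x => by simpa using ⟨hlS x, hSl x⟩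
    rw [linearExtensions_toFinset hl, Finset.sum_singleton]
  push Not at hSl
  obtain ⟨a, haS, hal⟩ := hSl
  rw [linearExtensions_eq_biUnion_insertIdx haS hal,
    Finset.sum_biUnion (pairwiseDisjoint_linearExtensions_insertIdx hal),
    hq.eq_sum_insertIdx l a hl hal]
  refine Finset.sum_congr rfl fun i hi => ?_
  have hi : i ≤ l.length := Finset.mem_range_succ_iff.1 hi
  exact hq.sum_linearExtensions (hl.insertIdx hal hi) fun x hx =>
    ((mem_insertIdx hi).1 hx).elim (fun h => h ▸ haS) (hlS x)
termination_by S.card - l.length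
decreasing_by
  have : l.length < S.card := by
    rw [← toFinset_card_of_nodup hl]
    exact Finset.card_lt_card ⟨fun x hx => hlS x (mem_toFinset.1 hx),
      fun h => hal (mem_toFinset.1 (h haS))⟩
  rw [length_insertIdx_of_le_length hi]
  omega

theorem le_sum_of_chainEvent_subset_biUnion (hq : IsConsistent q) (hl : l.Nodup) {ι : Type*}
    (F : Finset ι) (c : ι → List X) (hc : ∀ i ∈ F, (c i).Nodup)
    (hcov : chainEvent l ⊆ ⋃ i ∈ F, chainEvent (c i)) :
    q l ≤ ∑ i ∈ F, q (c i) := by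
  set S := l.toFinset ∪ F.biUnion fun i => (c i).toFinset
  set T := (F.sigma fun i => linearExtensions S (c i)).image Sigma.snd
  have hcS : ∀ i ∈ F, ∀ x ∈ c i, x ∈ S := fun i hi x hx => by
    simp only [S, Finset.mem_union, Finset.mem_biUnion, mem_toFinset]
    exact Or.inr ⟨i, hi, hx⟩
  have hT : linearExtensions S l ⊆ T := by
    intro m hm
    obtain ⟨hm, hmS, hlm⟩ := mem_linearExtensions.1 hm
    obtain ⟨π, hπ⟩ := chainEvent_nonempty hm
    obtain ⟨i, hi, hπi⟩ := Set.mem_iUnion₂.1 (hcov (hπ.sublist hlm))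
    have hcm : c i ⊆ m := fun x hx => by
      rw [← mem_toFinset, hmS]
      exact hcS i hi x hx
    refine Finset.mem_image.2 ⟨⟨i, m⟩, Finset.mem_sigma.2 ⟨hi, ?_⟩, rfl⟩
    exact mem_linearExtensions.2 ⟨hm, hmS, (mem_chainEvent_iff_sublist hπ hcm).1 hπi⟩
  have hT_nonneg : ∀ m ∈ T, 0 ≤ q m := by
    simp only [T, Finset.mem_image, Finset.mem_sigma, mem_linearExtensions]
    rintro m ⟨⟨i, m⟩, ⟨-, hm, -⟩, rfl⟩
    exact hq.nonneg m hm
  calc q l = ∑ m ∈ linearExtensions S l, q m :=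
        (hq.sum_linearExtensions hl fun x hx => by simp [S, hx]).symm
    _ ≤ ∑ m ∈ T, q m := Finset.sum_le_sum_of_subset_of_nonneg hT fun m hm _ => hT_nonneg m hm
    _ ≤ ∑ x ∈ F.sigma fun i => linearExtensions S (c i), q x.2 :=
        Finset.sum_image_le_of_nonneg hT_nonneg
    _ = ∑ i ∈ F, q (c i) := by
        rw [Finset.sum_sigma]
        exact Finset.sum_congr rfl fun i hi => hq.sum_linearExtensions (hc i hi) (hcS i hi)

theorem le_of_chainEvent_subset (hq : IsConsistent q) (hl : l.Nodup) (hm : m.Nodup)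
    (h : chainEvent l ⊆ chainEvent m) : q l ≤ q m := by
  simpa using hq.le_sum_of_chainEvent_subset_biUnion hl {()} (fun _ => m) (fun _ _ => hm)
    fun π hπ => Set.mem_iUnion₂.2 ⟨(), Finset.mem_singleton_self _, h hπ⟩

theorem chainContent_chainEvent (hq : IsConsistent q) (hl : l.Nodup) :
    chainContent q (chainEvent l) = ENNReal.ofReal (q l) := by
  rw [chainContent, if_neg (chainEvent_nonempty hl).ne_empty]
  refine le_antisymm (iInf₂_le l ⟨hl, rfl⟩) (le_iInf₂ fun c ⟨hc, hlc⟩ => ?_)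
  exact ENNReal.ofReal_le_ofReal (hq.le_of_chainEvent_subset hl hc hlc.subset)

theorem chainOuterMeasure_le_sum (hq : IsConsistent q) {B : Finset (List X)}
    (hB : ∀ m ∈ B, m.Nodup) {s : Set (StrictTotalOrders X)} (hs : s ⊆ ⋃ m ∈ B, chainEvent m) :
    chainOuterMeasure q s ≤ ∑ m ∈ B, ENNReal.ofReal (q m) :=
  (measure_mono hs).trans <| (measure_biUnion_finset_le B _).trans <| Finset.sum_le_sum
    fun m hm => (OuterMeasure.ofFunction_le _).trans (hq.chainContent_chainEvent (hB m hm)).le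

theorem ofReal_le_chainOuterMeasure (hq : IsConsistent q) (hl : l.Nodup) :
    ENNReal.ofReal (q l) ≤ chainOuterMeasure q (chainEvent l) := by
  refine le_iInf₂ fun t ht => ?_
  by_cases htop : ∃ n, chainContent q (t n) = ⊤
  · obtain ⟨n, hn⟩ := htop
    exact le_top.trans_eq (ENNReal.tsum_eq_top_of_eq_top ⟨n, hn⟩).symm
  push Not at htop
  have hc (n : {n // (t n).Nonempty}) : ∃ c : List X, c.Nodup ∧ t n = chainEvent c :=
    ((chainContent_trichotomy q (t n)).resolve_left n.2.ne_empty).resolve_left (htop n)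
  choose c hc using hc
  obtain ⟨F, hF⟩ := (isClopen_chainEvent l).isClosed.isCompact.elim_finite_subcover
    (fun n => chainEvent (c n)) (fun n => (isClopen_chainEvent _).isOpen) fun π hπ => by
      obtain ⟨n, hn⟩ := Set.mem_iUnion.1 (ht hπ)
      exact Set.mem_iUnion.2 ⟨⟨n, π, hn⟩, (hc _).2 ▸ hn⟩
  calc ENNReal.ofReal (q l) ≤ ENNReal.ofReal (∑ n ∈ F, q (c n)) :=
        ENNReal.ofReal_le_ofReal <|
          hq.le_sum_of_chainEvent_subset_biUnion hl F c (fun n _ => (hc n).1) hF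
    _ = ∑ n ∈ F, chainContent q (t n) := by
        rw [ENNReal.ofReal_sum_of_nonneg fun n _ => hq.nonneg _ (hc n).1]
        exact Finset.sum_congr rfl fun n _ => by rw [(hc n).2, hq.chainContent_chainEvent (hc n).1]
    _ ≤ ∑' n : {n // (t n).Nonempty}, chainContent q (t n) := ENNReal.sum_le_tsum F
    _ ≤ ∑' n, chainContent q (t n) :=
        ENNReal.tsum_comp_le_tsum_of_injective Subtype.val_injective _

theorem chainOuterMeasure_chainEvent (hq : IsConsistent q) (hl : l.Nodup) :
    chainOuterMeasure q (chainEvent l) = ENNReal.ofReal (q l) :=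
  le_antisymm ((OuterMeasure.ofFunction_le _).trans (hq.chainContent_chainEvent hl).le)
    (hq.ofReal_le_chainOuterMeasure hl)

theorem chainOuterMeasure_inter_add_diff_le (hq : IsConsistent q) (hc : c.Nodup) :
    chainOuterMeasure q (chainEvent c ∩ chainEvent l) +
        chainOuterMeasure q (chainEvent c \ chainEvent l) ≤ ENNReal.ofReal (q c) := by
  set S := c.toFinset ∪ l.toFinset
  set B := linearExtensions S c
  have hB : ∀ m ∈ B, m.Nodup := fun m hm => (mem_linearExtensions.1 hm).1
  have hsplit : ∀ π ∈ chainEvent c,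
      ∃ m ∈ B, π ∈ chainEvent m ∧ (π ∈ chainEvent l ↔ l <+ m) := by
    intro π hπ
    obtain ⟨m, hm, hmS, hπm⟩ := exists_mem_chainEvent_toFinset_eq π S
    have hsub : ∀ x, x ∈ c ∨ x ∈ l → x ∈ m := by simp [← mem_toFinset, hmS, S]
    refine ⟨m, mem_linearExtensions.2 ⟨hm, hmS, ?_⟩, hπm,
      mem_chainEvent_iff_sublist hπm fun x hx => hsub x (Or.inr hx)⟩
    exact (mem_chainEvent_iff_sublist hπm fun x hx => hsub x (Or.inl hx)).1 hπ
  calc chainOuterMeasure q (chainEvent c ∩ chainEvent l) +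
          chainOuterMeasure q (chainEvent c \ chainEvent l)
      ≤ ∑ m ∈ B with l <+ m, ENNReal.ofReal (q m) +
          ∑ m ∈ B with ¬ l <+ m, ENNReal.ofReal (q m) := by
        gcongr
        · refine hq.chainOuterMeasure_le_sum (fun m hm => hB m (Finset.mem_filter.1 hm).1) ?_
          rintro π ⟨hπc, hπl⟩
          obtain ⟨m, hm, hπm, hiff⟩ := hsplit π hπc
          exact Set.mem_iUnion₂.2 ⟨m, Finset.mem_filter.2 ⟨hm, hiff.1 hπl⟩, hπm⟩
        · refine hq.chainOuterMeasure_le_sum (fun m hm => hB m (Finset.mem_filter.1 hm).1) ?_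
          rintro π ⟨hπc, hπl⟩
          obtain ⟨m, hm, hπm, hiff⟩ := hsplit π hπc
          exact Set.mem_iUnion₂.2 ⟨m, Finset.mem_filter.2 ⟨hm, mt hiff.2 hπl⟩, hπm⟩
    _ = ∑ m ∈ B, ENNReal.ofReal (q m) := Finset.sum_filter_add_sum_filter_not _ _ _
    _ = ENNReal.ofReal (q c) := by
        rw [← ENNReal.ofReal_sum_of_nonneg fun m hm => hq.nonneg m (hB m hm),
          hq.sum_linearExtensions hc fun x hx => by simp [S, hx]]

theorem le_caratheodory (hq : IsConsistent q) :
    ordersMeasurableSpace X ≤ (chainOuterMeasure q).caratheodory := by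
  refine MeasurableSpace.generateFrom_le ?_
  rintro _ ⟨l, -, rfl⟩
  -- `t ↦ ν (t ∩ s) + ν (t \ s)` is an outer measure, so it is enough to bound it by the
  -- generating function of `ν = chainOuterMeasure q`, i.e. on cylinders.
  have h : (chainOuterMeasure q).restrict (chainEvent l) +
      (chainOuterMeasure q).restrict (chainEvent l)ᶜ ≤ chainOuterMeasure q := by
    refine OuterMeasure.le_ofFunction.2 fun t => ?_
    rcases chainContent_trichotomy q t with rfl | htop | ⟨c, hc, rfl⟩
    · simp
    · simp [htop]
    · simpa [hq.chainContent_chainEvent hc, ← Set.sdiff_eq] using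
        hq.chainOuterMeasure_inter_add_diff_le hc
  exact (OuterMeasure.isCaratheodory_iff_le _).2 fun t => by simpa [Set.sdiff_eq] using h t

theorem exists_measure_chainEvent (hq : IsConsistent q) :
    ∃ μ : Measure (StrictTotalOrders X),
      ∀ l : List X, l.Nodup → μ (chainEvent l) = ENNReal.ofReal (q l) :=
  ⟨(chainOuterMeasure q).toMeasure hq.le_caratheodory, fun l hl => by
    rw [toMeasure_apply _ _ (measurableSet_chainEvent hl), hq.chainOuterMeasure_chainEvent hl]⟩

end IsConsistent

theorem eq_sum_insertIdx_of_measure_chainEvent (μ : Measure (StrictTotalOrders X))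
    {p : List X → ℝ} (hp : ∀ l : List X, l.Nodup → 0 ≤ p l)
    (hμ : ∀ l : List X, l.Nodup → l ≠ [] → μ (chainEvent l) = ENNReal.ofReal (p l))
    {l : List X} {a : X} (hl : l.Nodup) (hl0 : l ≠ []) (ha : a ∉ l) :
    p l = ∑ i ∈ Finset.range (l.length + 1), p (l.insertIdx i a) := by
  have hi {i} (hi : i ∈ Finset.range (l.length + 1)) : i ≤ l.length :=
    Finset.mem_range_succ_iff.1 hi
  have hnn i (h : i ∈ Finset.range (l.length + 1)) : 0 ≤ p (l.insertIdx i a) :=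
    hp _ (hl.insertIdx ha (hi h))
  have h := measure_chainEvent_eq_sum_insertIdx μ hl ha
  rw [hμ l hl hl0, Finset.sum_congr rfl fun i h => hμ _ (hl.insertIdx ha (hi h))
    (insertIdx_ne_nil (hi h)), ← ENNReal.ofReal_sum_of_nonneg hnn] at h
  exact (ENNReal.ofReal_eq_ofReal_iff (hp l hl) (Finset.sum_nonneg hnn)).1 h

end StrictTotalOrders

open StrictTotalOrders

/-- Marginals lemma: given numbers `p ā ∈ [0,1]` for every finite sequence (list) of
distinct elements of `X`, there exists a probability measure `μ` on the strict total
orders of `X` with `μ {π : a₁ ≻ ⋯ ≻ a_n} = p (a₁,…,a_n)` for every nonempty such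
sequence, if and only if `p (a) = 1` for every singleton and, for every nonempty
sequence of distinct elements and every fresh element `a`,
`p (a₁,…,a_n) = ∑_{i=0}^{n} p (a₁,…,a_i,a,a_{i+1},…,a_n)`. -/
theorem order_marginals {X : Type*} (p : List X → ℝ)
    (hp : ∀ l : List X, l.Nodup → 0 ≤ p l ∧ p l ≤ 1) :
    (∃ μ : Measure (StrictTotalOrders X), IsProbabilityMeasure μ ∧
        ∀ l : List X, l.Nodup → l ≠ [] → μ (chainEvent l) = ENNReal.ofReal (p l)) ↔
      ((∀ a : X, p [a] = 1) ∧
        ∀ (l : List X) (a : X), l.Nodup → l ≠ [] → a ∉ l →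
          p l = ∑ i ∈ Finset.range (l.length + 1), p (l.insertIdx i a)) := by
  have hp_nonneg l (hl : l.Nodup) : 0 ≤ p l := (hp l hl).1
  constructor
  · rintro ⟨μ, hμ, hμp⟩
    refine ⟨fun a => ?_, fun l a hl hl0 ha =>
      eq_sum_insertIdx_of_measure_chainEvent μ hp_nonneg hμp hl hl0 ha⟩
    have h := hμp [a] (nodup_singleton a) (cons_ne_nil a [])
    rw [chainEvent_singleton, measure_univ] at h
    exact ENNReal.ofReal_eq_one.1 h.symm
  · rintro ⟨hone, hsum⟩
    obtain ⟨μ, hμ⟩ := (isConsistent_ite_nil hp_nonneg hone hsum).exists_measure_chainEvent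
    refine ⟨μ, ⟨?_⟩, fun l hl hl0 => by simpa [hl0] using hμ l hl⟩
    simpa [chainEvent_nil] using hμ [] nodup_nil
end

section
/- In any dynamic matching market in which all arrival times are nonnegative, a matching chronology that is stable subject to tenure exists. -/
/-- A dynamic matching market: a marriage market (injective `Option ℕ`-valued
rankings encode preference lists of order type at most ω, `none` = unacceptable)
together with integer arrival and departure times for each man; women are always
present. -/
structure DynMarket (M W : Type*) where
  mPref : M → W → Option ℕ
  wPref : W → M → Option ℕ
  mPref_inj : ∀ m w w' r, mPref m w = some r → mPref m w' = some r → w = w'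
  wPref_inj : ∀ w m m' r, wPref w m = some r → wPref w m' = some r → m = m'
  arr : M → ℤ
  dep : M → ℤ
  arr_lt_dep : ∀ m, arr m < dep m

namespace DynMarket

variable {M W : Type*}

/-- Man `m` is on the market at time `t` if `arr m ≤ t < dep m`. -/
def OnMarket (E : DynMarket M W) (m : M) (t : ℤ) : Prop :=
  E.arr m ≤ t ∧ t < E.dep m

/-- A matching chronology: at each time, each man is matched to at most one woman
and each woman to at most one man, and only men currently on the market are matched. -/
def IsChronology (E : DynMarket M W) (μ : ℤ → M → Option W) : Prop :=
  (∀ t m m' w, μ t m = some w → μ t m' = some w → m = m') ∧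
  (∀ t m w, μ t m = some w → OnMarket E m t)

/-- Man `m` strictly prefers woman `w` to the outcome `o`. -/
def ManPrefers (E : DynMarket M W) (m : M) (w : W) (o : Option W) : Prop :=
  ∃ r, E.mPref m w = some r ∧
    (o = none ∨ ∃ w' r', o = some w' ∧ E.mPref m w' = some r' ∧ r < r')

/-- Man `m` weakly prefers outcome `o` to outcome `o'`. -/
def ManWeaklyPrefers (E : DynMarket M W) (m : M) (o o' : Option W) : Prop :=
  o = o' ∨ ∃ w, o = some w ∧ ManPrefers E m w o'

/-- Woman `w` strictly prefers man `m` to her assignment under the one-period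
matching `ν`. -/
def WomanPrefers (E : DynMarket M W) (w : W) (m : M) (ν : M → Option W) : Prop :=
  ∃ r, E.wPref w m = some r ∧
    ((∀ m', ν m' ≠ some w) ∨ ∃ m' r', ν m' = some w ∧ E.wPref w m' = some r' ∧ r < r')

/-- The chronology `μ` is stable subject to tenure: it is a chronology in which no
one is ever matched to an unacceptable partner; every man present at consecutive
times weakly prefers his later match to his earlier one (tenure); and at no time is
there a man-woman pair each strictly preferring the other to their current
assignment, except that a woman whose current partner is also her previous-period
partner cannot participate in a block. -/
def StableSubjectToTenure (E : DynMarket M W) (μ : ℤ → M → Option W) : Prop :=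
  IsChronology E μ ∧
  (∀ t m w, μ t m = some w → E.mPref m w ≠ none ∧ E.wPref w m ≠ none) ∧
  (∀ t m, OnMarket E m t → OnMarket E m (t + 1) →
    ManWeaklyPrefers E m (μ (t + 1) m) (μ t m)) ∧
  (∀ t m w, OnMarket E m t →
    ¬ (ManPrefers E m w (μ t m) ∧ WomanPrefers E w m (μ t) ∧
        ¬ ∃ m', μ t m' = some w ∧ μ (t - 1) m' = some w))

/-- Finite presence: at every time `t`, only finitely many men are on the market at
both `t` and `t + 1`. -/
def FinitePresence (E : DynMarket M W) : Prop :=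
  ∀ t : ℤ, {m | OnMarket E m t ∧ OnMarket E m (t + 1)}.Finite

end DynMarket

/-!
A stable matching of a static market, possibly infinite, is read off a fixed point of
Tarski's theorem on cutoffs: a man's cutoff is the best rank, in his list, of a woman who
ranks him within her cutoff, and a woman's cutoff is the best rank, in her list, of a man
who ranks her within his. Since ranks are natural numbers these infima are attained, and
matching every man to the woman attaining his cutoff is stable.

In the dynamic market, at each time take such a stable matching of the men present, in
the market where every woman moves her partner of the previous period to the top of her
list. A man matched at `t` and still present at `t + 1` cannot be displaced, so his match
weakly improves; and a pair blocking the matching in the original market blocks it in the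
modified one, unless the woman kept her previous partner. Before time `0` nobody is
present, which starts the recursion.
-/

theorem sInf_mem_of_ne_top {α : Type*} [CompleteLinearOrder α] [WellFoundedLT α] {S : Set α}
    (h : sInf S ≠ ⊤) : sInf S ∈ S :=
  csInf_mem (Set.nonempty_iff_ne_empty.2 fun he => h (he ▸ sInf_empty))

noncomputable section

namespace DynMarket

variable {M W : Type*}

theorem ManPrefers.ne_some {E : DynMarket M W} {m : M} {w : W} {o : Option W}
    (h : ManPrefers E m w o) : o ≠ some w := by
  rintro rfl
  obtain ⟨r, hr, hnone | ⟨w', r', hw', hr', hlt⟩⟩ := h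
  · exact nomatch hnone
  · obtain rfl := Option.some.inj hw'
    obtain rfl := Option.some.inj (hr.symm.trans hr')
    exact lt_irrefl r hlt

theorem manWeaklyPrefers_or_manPrefers {E : DynMarket M W} {m : M} {w : W} {o : Option W}
    (hw : E.mPref m w ≠ none) (ho : ∀ w', o = some w' → E.mPref m w' ≠ none) :
    ManWeaklyPrefers E m o (some w) ∨ ManPrefers E m w o := by
  obtain ⟨r, hr⟩ := Option.ne_none_iff_exists'.1 hw
  rcases o with _ | w'
  · exact .inr ⟨r, hr, .inl rfl⟩
  obtain ⟨r', hr'⟩ := Option.ne_none_iff_exists'.1 (ho w' rfl)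
  rcases lt_trichotomy r r' with hlt | rfl | hgt
  · exact .inr ⟨r, hr, .inr ⟨w', r', rfl, hr', hlt⟩⟩
  · exact .inl (.inl (by rw [E.mPref_inj m w w' r hr hr']))
  · exact .inl (.inr ⟨w', rfl, r', hr', .inr ⟨w, r, rfl, hr, hgt⟩⟩)

section StableMatching

variable (E : DynMarket M W) (P : M → Prop)

structure IsStableMatching (ν : M → Option W) : Prop where
  participates : ∀ m w, ν m = some w → P m
  injective : ∀ m m' w, ν m = some w → ν m' = some w → m = m'
  acceptable : ∀ m w, ν m = some w → E.mPref m w ≠ none ∧ E.wPref w m ≠ none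
  not_blocking : ∀ m w, P m → ¬ (ManPrefers E m w (ν m) ∧ WomanPrefers E w m ν)

theorem isStableMatching_none (hP : ∀ m, ¬ P m) : IsStableMatching E P fun _ => none where
  participates _ _ h := nomatch h
  injective _ _ _ h := nomatch h
  acceptable _ _ h := nomatch h
  not_blocking m _ hm := absurd hm (hP m)

def manRanks (b : W → ℕ∞) (m : M) : Set ℕ∞ :=
  {x | ∃ w r s, E.mPref m w = some r ∧ E.wPref w m = some s ∧ (s : ℕ∞) ≤ b w ∧ x = r}

def womanRanks (a : M → ℕ∞) (w : W) : Set ℕ∞ :=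
  {x | ∃ m r s, P m ∧ E.mPref m w = some r ∧ E.wPref w m = some s ∧ (r : ℕ∞) ≤ a m ∧
    x = s}

def womanCutoffOf (a : M → ℕ∞) (w : W) : ℕ∞ :=
  sInf (E.womanRanks P a w)

theorem womanCutoffOf_antitone : Antitone (E.womanCutoffOf P) :=
  fun _ _ h _ => sInf_le_sInf fun _ ⟨m, r, s, hP, hr, hs, hle, hx⟩ =>
    ⟨m, r, s, hP, hr, hs, hle.trans (h m), hx⟩

def manCutoffMap : (M → ℕ∞) →o (M → ℕ∞) where
  toFun a m := sInf (E.manRanks (E.womanCutoffOf P a) m)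
  monotone' _ _ h _ := sInf_le_sInf fun _ ⟨w, r, s, hr, hs, hle, hx⟩ =>
    ⟨w, r, s, hr, hs, hle.trans (E.womanCutoffOf_antitone P h w), hx⟩

def manCutoff : M → ℕ∞ :=
  OrderHom.lfp (E.manCutoffMap P)

def womanCutoff : W → ℕ∞ :=
  E.womanCutoffOf P (E.manCutoff P)

def IsCutoffPair (m : M) (w : W) : Prop :=
  P m ∧ ∃ r s, E.mPref m w = some r ∧ E.wPref w m = some s ∧
    (s : ℕ∞) ≤ E.womanCutoff P w ∧ E.manCutoff P m = r

open Classical in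
def cutoffMatching (m : M) : Option W :=
  if h : ∃ w, E.IsCutoffPair P m w then some h.choose else none

theorem manCutoff_eq (m : M) : E.manCutoff P m = sInf (E.manRanks (E.womanCutoff P) m) :=
  congrFun (E.manCutoffMap P).map_lfp.symm m

variable {E P}

theorem manCutoff_le {m : M} {w : W} {r s : ℕ} (hr : E.mPref m w = some r)
    (hs : E.wPref w m = some s) (hle : (s : ℕ∞) ≤ E.womanCutoff P w) :
    E.manCutoff P m ≤ r := by
  rw [manCutoff_eq]
  exact sInf_le ⟨w, r, s, hr, hs, hle, rfl⟩

theorem IsCutoffPair.manCutoff_eq {m : M} {w : W} {r : ℕ} (h : E.IsCutoffPair P m w)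
    (hr : E.mPref m w = some r) : E.manCutoff P m = r := by
  obtain ⟨-, r', s, hr', -, -, heq⟩ := h
  obtain rfl := Option.some.inj (hr.symm.trans hr')
  exact heq

theorem IsCutoffPair.unique {m : M} {w w' : W} (h : E.IsCutoffPair P m w)
    (h' : E.IsCutoffPair P m w') : w = w' := by
  obtain ⟨-, r, -, hr, -, -, heq⟩ := h
  obtain ⟨-, r', -, hr', -, -, heq'⟩ := h'
  obtain rfl : r = r' := by exact_mod_cast heq.symm.trans heq'
  exact E.mPref_inj m w w' r hr hr'

theorem IsCutoffPair.womanCutoff_eq {m : M} {w : W} {s : ℕ} (h : E.IsCutoffPair P m w)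
    (hs : E.wPref w m = some s) : E.womanCutoff P w = s := by
  obtain ⟨hP, r, s', hr, hs', hle, heq⟩ := h
  obtain rfl := Option.some.inj (hs.symm.trans hs')
  exact le_antisymm (sInf_le ⟨m, r, s, hP, hr, hs, heq.ge, rfl⟩) hle

theorem exists_isCutoffPair_of_manCutoff_ne_top {m : M} (hP : P m)
    (h : E.manCutoff P m ≠ ⊤) : ∃ w, E.IsCutoffPair P m w := by
  rw [manCutoff_eq] at h
  obtain ⟨w, r, s, hr, hs, hle, hx⟩ := sInf_mem_of_ne_top h
  exact ⟨w, hP, r, s, hr, hs, hle, (manCutoff_eq E P m).trans hx⟩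

theorem exists_isCutoffPair_of_womanCutoff_ne_top {w : W} (h : E.womanCutoff P w ≠ ⊤) :
    ∃ m s, E.IsCutoffPair P m w ∧ E.wPref w m = some s ∧ E.womanCutoff P w = s := by
  obtain ⟨m, r, s, hP, hr, hs, hle, hx⟩ := sInf_mem_of_ne_top h
  have hs_le : (s : ℕ∞) ≤ E.womanCutoff P w := hx.ge
  exact ⟨m, s, ⟨hP, r, s, hr, hs, hs_le, (manCutoff_le hr hs hs_le).antisymm hle⟩, hs, hx⟩

theorem cutoffMatching_eq_some_iff {m : M} {w : W} :
    E.cutoffMatching P m = some w ↔ E.IsCutoffPair P m w := by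
  unfold cutoffMatching
  split_ifs with h
  · exact ⟨fun he => Option.some.inj he ▸ h.choose_spec,
      fun hw => congrArg some (h.choose_spec.unique hw)⟩
  · exact ⟨nofun, fun hw => absurd ⟨w, hw⟩ h⟩

theorem lt_manCutoff_of_manPrefers {m : M} {w : W} {r : ℕ} (hP : P m)
    (h : ManPrefers E m w (E.cutoffMatching P m)) (hr : E.mPref m w = some r) :
    (r : ℕ∞) < E.manCutoff P m := by
  obtain ⟨r', hr', hcur⟩ := h
  obtain rfl := Option.some.inj (hr.symm.trans hr')
  rcases hcur with hnone | ⟨w', r', hw', hr', hlt⟩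
  · suffices E.manCutoff P m = ⊤ from this ▸ ENat.natCast_lt_top r
    by_contra hne
    obtain ⟨w', hw'⟩ := exists_isCutoffPair_of_manCutoff_ne_top hP hne
    rw [← cutoffMatching_eq_some_iff, hnone] at hw'
    exact nomatch hw'
  · rw [(cutoffMatching_eq_some_iff.1 hw').manCutoff_eq hr']
    exact_mod_cast hlt

theorem cutoffMatching_injective {m m' : M} {w : W} (h : E.cutoffMatching P m = some w)
    (h' : E.cutoffMatching P m' = some w) : m = m' := by
  obtain ⟨-, -, s, -, hs, -⟩ := cutoffMatching_eq_some_iff.1 h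
  obtain ⟨-, -, s', -, hs', -⟩ := cutoffMatching_eq_some_iff.1 h'
  obtain rfl : s = s' := by
    exact_mod_cast ((cutoffMatching_eq_some_iff.1 h).womanCutoff_eq hs).symm.trans
      ((cutoffMatching_eq_some_iff.1 h').womanCutoff_eq hs')
  exact E.wPref_inj w m m' s hs hs'

variable (E P)

theorem isStableMatching_cutoffMatching : IsStableMatching E P (E.cutoffMatching P) where
  participates _ _ h := (cutoffMatching_eq_some_iff.1 h).1
  injective _ _ _ := cutoffMatching_injective
  acceptable _ _ h := by
    obtain ⟨-, r, s, hr, hs, -⟩ := cutoffMatching_eq_some_iff.1 h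
    exact ⟨hr ▸ nofun, hs ▸ nofun⟩
  not_blocking m w hP := by
    rintro ⟨hman, s, hs, hwoman⟩
    have ⟨r, hr, _⟩ := hman
    have hlt : (r : ℕ∞) < E.manCutoff P m := lt_manCutoff_of_manPrefers hP hman hr
    -- `w` is out of reach for `m` only because she can do better than him
    have hcut : E.womanCutoff P w < s :=
      lt_of_not_ge fun hle => (manCutoff_le hr hs hle).not_gt hlt
    obtain ⟨m₀, s₀, h₀, hs₀, heq⟩ :=
      exists_isCutoffPair_of_womanCutoff_ne_top hcut.ne_top
    rw [← cutoffMatching_eq_some_iff] at h₀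
    rcases hwoman with hunmatched | ⟨m', s', hm', hs', hlt'⟩
    · exact hunmatched m₀ h₀
    · obtain rfl := cutoffMatching_injective hm' h₀
      obtain rfl := Option.some.inj (hs'.symm.trans hs₀)
      have : s' < s := by exact_mod_cast heq ▸ hcut
      omega

end StableMatching

section Tenure

variable (E : DynMarket M W)

def IsUniquePartner (ν : M → Option W) (w : W) (m : M) : Prop :=
  ν m = some w ∧ ∀ m', ν m' = some w → m' = m

-- Requiring the partner to be unique keeps the modified preferences injective for any `ν`.
open Classical in
def promote (ν : M → Option W) : DynMarket M W :=
  { E with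
    wPref := fun w m => (E.wPref w m).map fun s => if IsUniquePartner ν w m then 0 else s + 1
    wPref_inj := by
      intro w m m' k h h'
      obtain ⟨s, hs, rfl⟩ := Option.map_eq_some_iff.1 h
      obtain ⟨s', hs', heq⟩ := Option.map_eq_some_iff.1 h'
      split_ifs at heq with hm' hm
      · exact hm'.2 m hm.1
      · exact E.wPref_inj w m m' s hs (Nat.succ_injective heq ▸ hs') }

variable {E}

theorem promote_wPref_eq_none_iff {ν : M → Option W} {w : W} {m : M} :
    (E.promote ν).wPref w m = none ↔ E.wPref w m = none :=
  Option.map_eq_none_iff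

theorem promote_wPref_of_isUniquePartner {ν : M → Option W} {w : W} {m : M} {s : ℕ}
    (h : IsUniquePartner ν w m) (hs : E.wPref w m = some s) :
    (E.promote ν).wPref w m = some 0 := by
  simp [promote, hs, h]

theorem promote_wPref_of_not_isUniquePartner {ν : M → Option W} {w : W} {m : M} {s : ℕ}
    (h : ¬ IsUniquePartner ν w m) (hs : E.wPref w m = some s) :
    (E.promote ν).wPref w m = some (s + 1) := by
  simp [promote, hs, h]

theorem exists_promote_wPref_le {ν : M → Option W} {w : W} {m : M} {s : ℕ}
    (hs : E.wPref w m = some s) : ∃ k ≤ s + 1, (E.promote ν).wPref w m = some k := by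
  by_cases h : IsUniquePartner ν w m
  · exact ⟨0, by omega, promote_wPref_of_isUniquePartner h hs⟩
  · exact ⟨s + 1, le_rfl, promote_wPref_of_not_isUniquePartner h hs⟩

theorem womanPrefers_promote_of_isUniquePartner {ν ν' : M → Option W} {w : W} {m : M}
    (hpartner : IsUniquePartner ν w m) (hm : E.wPref w m ≠ none) (hν' : ν' m ≠ some w)
    (hacc : ∀ m', ν' m' = some w → E.wPref w m' ≠ none) :
    WomanPrefers (E.promote ν) w m ν' := by
  obtain ⟨s, hs⟩ := Option.ne_none_iff_exists'.1 hm
  refine ⟨0, promote_wPref_of_isUniquePartner hpartner hs, ?_⟩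
  by_cases hmatched : ∃ m', ν' m' = some w
  · obtain ⟨m', hm'⟩ := hmatched
    obtain ⟨s', hs'⟩ := Option.ne_none_iff_exists'.1 (hacc m' hm')
    have hnot : ¬ IsUniquePartner ν w m' := fun h' =>
      hν' (hpartner.2 m' h'.1 ▸ hm')
    exact .inr ⟨m', s' + 1, hm', promote_wPref_of_not_isUniquePartner hnot hs', s'.succ_pos⟩
  · exact .inl fun m' hm' => hmatched ⟨m', hm'⟩

theorem womanPrefers_promote {ν ν' : M → Option W} {w : W} {m : M}
    (h : WomanPrefers E w m ν') (hnew : ¬ ∃ m', ν' m' = some w ∧ ν m' = some w) :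
    WomanPrefers (E.promote ν) w m ν' := by
  obtain ⟨s, hs, hcur⟩ := h
  obtain ⟨k, hk, hpk⟩ := exists_promote_wPref_le (ν := ν) hs
  refine ⟨k, hpk, hcur.imp_right ?_⟩
  rintro ⟨m', s', hm', hs', hlt⟩
  have hnot : ¬ IsUniquePartner ν w m' := fun h' => hnew ⟨m', hm', h'.1⟩
  exact ⟨m', s' + 1, hm', promote_wPref_of_not_isUniquePartner hnot hs', by omega⟩

theorem manWeaklyPrefers_of_isStableMatching_promote {P : M → Prop} {ν ν' : M → Option W}
    {m : M} (hunique : ∀ w, ν m = some w → IsUniquePartner ν w m)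
    (hacc : ∀ w, ν m = some w → E.mPref m w ≠ none ∧ E.wPref w m ≠ none)
    (hν' : IsStableMatching (E.promote ν) P ν') (hm : P m) :
    ManWeaklyPrefers E m (ν' m) (ν m) := by
  have hacc' : ∀ m' w, ν' m' = some w → E.mPref m' w ≠ none ∧ E.wPref w m' ≠ none :=
    fun m' w h => (hν'.acceptable m' w h).imp_right (mt promote_wPref_eq_none_iff.2)
  rcases hνm : ν m with _ | w
  · rcases hν'm : ν' m with _ | w'
    · exact .inl rfl
    · obtain ⟨r, hr⟩ := Option.ne_none_iff_exists'.1 (hacc' m w' hν'm).1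
      exact .inr ⟨w', rfl, r, hr, .inl rfl⟩
  · refine (manWeaklyPrefers_or_manPrefers (hacc w hνm).1
      fun w' h => (hacc' m w' h).1).resolve_right fun hpref => ?_
    -- `w` still ranks `m` first, so they would block `ν'`
    exact hν'.not_blocking m w hm ⟨hpref, womanPrefers_promote_of_isUniquePartner
      (hunique w hνm) (hacc w hνm).2 hpref.ne_some fun m' h => (hacc' m' w h).2⟩

theorem stableSubjectToTenure_of_isStableMatching_promote {μ : ℤ → M → Option W}
    (hμ : ∀ t, IsStableMatching (E.promote (μ (t - 1))) (E.OnMarket · t) (μ t)) :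
    StableSubjectToTenure E μ := by
  have hacc : ∀ t m w, μ t m = some w → E.mPref m w ≠ none ∧ E.wPref w m ≠ none :=
    fun t m w h => ((hμ t).acceptable m w h).imp_right (mt promote_wPref_eq_none_iff.2)
  refine ⟨⟨fun t => (hμ t).injective, fun t => (hμ t).participates⟩, hacc,
    fun t m _ hm => ?_, fun t m w hm ⟨hman, hwoman, hnew⟩ => ?_⟩
  · have hnext := hμ (t + 1)
    rw [add_sub_cancel_right] at hnext
    exact manWeaklyPrefers_of_isStableMatching_promote
      (fun w h => ⟨h, fun m' h' => (hμ t).injective m' m w h' h⟩) (hacc t m) hnext hm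
  · exact (hμ t).not_blocking m w hm ⟨hman, womanPrefers_promote hwoman hnew⟩

variable (E)

def tenureChain : ℕ → M → Option W
  | 0 => fun _ => none
  | n + 1 => (E.promote (tenureChain n)).cutoffMatching (E.OnMarket · n)

-- `tenureChain (n + 1)` is the matching at time `n`; every time `t < 0` gets `tenureChain 0`.
def tenureChronology (t : ℤ) : M → Option W :=
  E.tenureChain (t + 1).toNat

theorem isStableMatching_tenureChronology (harr : ∀ m, 0 ≤ E.arr m) (t : ℤ) :
    IsStableMatching (E.promote (E.tenureChronology (t - 1))) (E.OnMarket · t)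
      (E.tenureChronology t) := by
  rcases lt_or_ge t 0 with ht | ht
  · rw [tenureChronology, tenureChronology, show (t + 1).toNat = 0 by omega]
    exact isStableMatching_none _ _ fun m hm => (harr m).not_gt (hm.1.trans_lt ht)
  · obtain ⟨n, rfl⟩ := Int.eq_ofNat_of_zero_le ht
    rw [tenureChronology, tenureChronology, show ((n : ℤ) + 1).toNat = n + 1 by omega,
      show ((n : ℤ) - 1 + 1).toNat = n by omega]
    exact isStableMatching_cutoffMatching _ _

end Tenure

end DynMarket

end

open DynMarket in
/-- Pereyra: in any dynamic matching market in which all arrival times are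
nonnegative, a matching chronology stable subject to tenure exists. -/
theorem dynamic_stable_exists_nonneg_arrivals {M W : Type*} (E : DynMarket M W)
    (harr : ∀ m, 0 ≤ E.arr m) :
    ∃ μ : ℤ → M → Option W, StableSubjectToTenure E μ :=
  ⟨E.tenureChronology,
    stableSubjectToTenure_of_isStableMatching_promote (E.isStableMatching_tenureChronology harr)⟩
end

section
/- There exists a dynamic matching market with one woman and countably many men, in which all agents find all partners acceptable, that does not have finite presence and admits no matching chronology stable subject to tenure. -/
/-!
Man `n` is on the market during `[-(n+1), 0)`. At every time `t < 0` the woman is matched, for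
otherwise she and the man `-t`, who is present and necessarily unmatched, would block. Tenure
keeps a matched man matched until he leaves at time `0`, so the man matched with her at time
`-(m+2)` is still matched with her at `-1`, and is therefore the man `m` matched at `-1`; but `m`
only arrives at `-(m+1)`.
-/

namespace DynMarket

variable {M W : Type*} {E : DynMarket M W}

theorem OnMarket.of_le_of_le {m : M} {s u t : ℤ} (hs : E.OnMarket m s) (ht : E.OnMarket m t)
    (hsu : s ≤ u) (hut : u ≤ t) : E.OnMarket m u :=
  ⟨hs.1.trans hsu, hut.trans_lt ht.2⟩

theorem ManWeaklyPrefers.ne_none {m : M} {o o' : Option W} (h : E.ManWeaklyPrefers m o o')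
    (ho' : o' ≠ none) : o ≠ none := by
  rcases h with rfl | ⟨w, rfl, -⟩
  · exact ho'
  · exact Option.some_ne_none w

namespace StableSubjectToTenure

variable {μ : ℤ → M → Option W} (hμ : E.StableSubjectToTenure μ)
include hμ

theorem onMarket_of_ne_none {m : M} {t : ℤ} (h : μ t m ≠ none) : E.OnMarket m t := by
  obtain ⟨w, hw⟩ := Option.ne_none_iff_exists'.1 h
  exact hμ.1.2 t m w hw

theorem ne_none_of_le {m : M} {s t : ℤ} (hst : s ≤ t) (hs : μ s m ≠ none)
    (ht : E.OnMarket m t) : μ t m ≠ none := by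
  induction t, hst using Int.leInduction with
  | base => exact hs
  | succ u hsu ih =>
    have hu : E.OnMarket m u := (hμ.onMarket_of_ne_none hs).of_le_of_le ht hsu (by omega)
    exact (hμ.2.2.1 u m hu ht).ne_none (ih hu)

theorem exists_eq_some_of_eq_none {m : M} {w : W} {t : ℤ} (hm : E.OnMarket m t)
    (hmw : E.mPref m w ≠ none) (hwm : E.wPref w m ≠ none) (hunmatched : μ t m = none) :
    ∃ m', μ t m' = some w := by
  by_contra! hw
  obtain ⟨r, hr⟩ := Option.ne_none_iff_exists'.1 hmw
  obtain ⟨r', hr'⟩ := Option.ne_none_iff_exists'.1 hwm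
  exact hμ.2.2.2 t m w hm
    ⟨⟨r, hr, Or.inl hunmatched⟩, ⟨r', hr', Or.inl hw⟩, fun ⟨m', hm', _⟩ => hw m' hm'⟩

end StableSubjectToTenure

def staggeredMarket : DynMarket ℕ Unit where
  mPref _ _ := some 0
  wPref _ m := some m
  mPref_inj _ _ _ _ _ _ := rfl
  wPref_inj _ _ _ _ h h' := Option.some_injective _ (h.trans h'.symm)
  arr m := -(m + 1)
  dep _ := 0
  arr_lt_dep m := by omega

theorem staggeredMarket_onMarket_iff {m : ℕ} {t : ℤ} :
    staggeredMarket.OnMarket m t ↔ -((m : ℤ) + 1) ≤ t ∧ t < 0 :=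
  Iff.rfl

theorem not_finitePresence_staggeredMarket : ¬ staggeredMarket.FinitePresence := fun hfin =>
  Set.Ici_infinite 1 <| (hfin (-2)).subset fun m (hm : 1 ≤ m) => by
    simp only [Set.mem_ofPred_eq, staggeredMarket_onMarket_iff]
    omega

theorem not_stableSubjectToTenure_staggeredMarket (μ : ℤ → ℕ → Option Unit) :
    ¬ staggeredMarket.StableSubjectToTenure μ := by
  intro hμ
  have woman_matched (t : ℤ) (ht : t < 0) : ∃ m, μ t m = some () := by
    have hpresent : staggeredMarket.OnMarket (-t).toNat t := by
      rw [staggeredMarket_onMarket_iff]; omega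
    cases hn : μ t (-t).toNat with
    | none =>
      exact hμ.exists_eq_some_of_eq_none hpresent (Option.some_ne_none _) (Option.some_ne_none _) hn
    | some _ => exact ⟨_, hn⟩
  obtain ⟨m, hm⟩ := woman_matched (-1) (by omega)
  obtain ⟨m', hm'⟩ := woman_matched (-((m : ℤ) + 2)) (by omega)
  have hm'_early := hμ.onMarket_of_ne_none (hm' ▸ Option.some_ne_none _)
  obtain ⟨⟨⟩, hm'_late⟩ := Option.ne_none_iff_exists'.1 <|
    hμ.ne_none_of_le (t := -1) (by omega) (hm' ▸ Option.some_ne_none _)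
      (staggeredMarket_onMarket_iff.2 (by omega))
  rw [hμ.1.1 (-1) m' m () hm'_late hm, staggeredMarket_onMarket_iff] at hm'_early
  omega

end DynMarket

open DynMarket in
/-- There exists a dynamic matching market with one woman and countably many men, in
which all agents find all partners acceptable, that does not have finite presence and
admits no matching chronology stable subject to tenure. -/
theorem dynamic_no_stable_without_finite_presence :
    ∃ E : DynMarket ℕ Unit,
      (∀ m w, E.mPref m w ≠ none) ∧ (∀ w m, E.wPref w m ≠ none) ∧
      ¬ FinitePresence E ∧
      ¬ ∃ μ : ℤ → ℕ → Option Unit, StableSubjectToTenure E μ :=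
  ⟨staggeredMarket, fun _ _ => Option.some_ne_none _, fun _ _ => Option.some_ne_none _,
    not_finitePresence_staggeredMarket, fun ⟨μ, hμ⟩ => not_stableSubjectToTenure_staggeredMarket μ hμ⟩
end
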